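/- arXiv:1111.7066 — 5 statements merged into one kernel-verified Lean document; each statement's English description precedes it below -/
import Mathlib

section
/- Let m ≥ 1, let A be an m×m complex matrix, and let t ≥ 0. Then ‖exp(tA)‖ ≤ ρ(exp(tA)) · (1 + Σ_{k=1}^{m−1} (2t)^k / k! · ‖A‖^k), where the sum over an empty range (m = 1) is 0. -/
/-!
By Schur's theorem `A = U T U*` with `U` unitary and `T = D + N` upper triangular, `D` diagonal
and `N` strictly upper triangular; unitary conjugation changes neither side. Expanding
`exp (t (D + N))` by Duhamel's formula in powers of `N` (the Dyson series), the `k`-th term is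
bounded by `e^{tα} (t ‖N‖)^k / k!`, where `α` is the largest real part of an eigenvalue
`T i i`, and all terms of order `≥ m` vanish because a product with `m` factors `N` is zero.
Finally `e^{tα} = |exp (t T i i)| ≤ ρ(exp (t T))` by the spectral mapping theorem, and
`‖N‖ ≤ ‖T‖ + ‖D‖ ≤ 2 ‖A‖`.
-/

open scoped Matrix.Norms.L2Operator InnerProductSpace
open NormedSpace (exp)
open Finset Nat Module

theorem LinearMap.exists_orthonormalBasis_inner_apply_eq_zero_of_lt {E : Type*}
    [NormedAddCommGroup E] [InnerProductSpace ℂ E] [FiniteDimensional ℂ E] {n : ℕ}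
    (hn : finrank ℂ E = n) (f : E →ₗ[ℂ] E) :
    ∃ b : OrthonormalBasis (Fin n) ℂ E, ∀ i j, i < j → ⟪b i, f (b j)⟫_ℂ = 0 := by
  induction n generalizing E with
  | zero => exact ⟨(stdOrthonormalBasis ℂ E).reindex (finCongr hn), fun i => i.elim0⟩
  | succ n ih =>
    have : Fact (finrank ℂ E = n + 1) := ⟨hn⟩
    have : Nontrivial E := Module.nontrivial_of_finrank_eq_succ hn
    -- the orthogonal complement of an eigenvector of the adjoint is `f`-invariant
    obtain ⟨c, hc⟩ := Module.End.exists_eigenvalue (LinearMap.adjoint f)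
    obtain ⟨v₀, hv₀⟩ := hc.exists_hasEigenvector
    set v : E := (‖v₀‖ : ℂ)⁻¹ • v₀
    have hv : LinearMap.adjoint f v = c • v := by
      rw [map_smul, hv₀.apply_eq_smul, smul_comm]
    set W : Submodule ℂ E := (ℂ ∙ v)ᗮ
    have hW : ∀ x ∈ W, f x ∈ W := fun x hx => by
      rw [Submodule.mem_orthogonal_singleton_iff_inner_right] at hx ⊢
      rw [← LinearMap.adjoint_inner_left, hv, inner_smul_left, hx, mul_zero]
    obtain ⟨b', hb'⟩ := ih (Submodule.finrank_orthogonal_span_singleton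
      (smul_ne_zero (by simpa using hv₀.2) hv₀.2)) (f.restrict hW)
    have hon : Orthonormal ℂ (Matrix.vecCons v fun i => (b' i : E)) :=
      orthonormal_vecCons_iff.mpr ⟨norm_smul_inv_norm hv₀.2,
        fun i => Submodule.mem_orthogonal_singleton_iff_inner_right.mp (b' i).2,
        b'.orthonormal.comp_linearIsometry W.subtypeₗᵢ⟩
    refine ⟨(basisOfOrthonormalOfCardEqFinrank hon (by simp [hn])).toOrthonormalBasis
      (by simpa using hon), fun i j hij => ?_⟩
    simp only [Basis.coe_toOrthonormalBasis, coe_basisOfOrthonormalOfCardEqFinrank]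
    obtain ⟨j, rfl⟩ := Fin.exists_succ_eq.mpr (Fin.ne_zero_of_lt hij)
    cases i using Fin.cases with
    | zero => exact Submodule.mem_orthogonal_singleton_iff_inner_right.mp (hW _ (b' j).2)
    | succ i => simpa using hb' i j (Fin.succ_lt_succ_iff.mp hij)

theorem Matrix.exists_mem_unitaryGroup_isUpperTriangular {m : ℕ}
    (A : Matrix (Fin m) (Fin m) ℂ) :
    ∃ U ∈ Matrix.unitaryGroup (Fin m) ℂ, (star U * A * U).IsUpperTriangular := by
  obtain ⟨b, hb⟩ := (Matrix.toEuclideanLin A).exists_orthonormalBasis_inner_apply_eq_zero_of_lt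
    finrank_euclideanSpace_fin
  set b' := b.reindex Fin.revPerm
  set e := EuclideanSpace.basisFun (Fin m) ℂ
  refine ⟨e.toBasis.toMatrix b'.toBasis, e.toMatrix_orthonormalBasis_mem_unitary b',
    fun i j hij => ?_⟩
  have hentry : (star (e.toBasis.toMatrix b'.toBasis) * A * e.toBasis.toMatrix b'.toBasis) i j =
      ⟪b' i, Matrix.toEuclideanLin A (b' j)⟫_ℂ := by
    simp only [e, OrthonormalBasis.coe_toBasis, mul_apply, star_apply, Basis.toMatrix_apply,
      OrthonormalBasis.coe_toBasis_repr_apply, EuclideanSpace.basisFun_repr, RCLike.star_def,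
      sum_mul, PiLp.inner_apply, ofLp_toLpLin, toLin'_apply, mulVec, dotProduct,
      RCLike.inner_apply]
    rw [Finset.sum_comm]
    simp only [mul_assoc, mul_comm, mul_left_comm]
  rw [hentry]
  simpa [b'] using hb _ _ (Fin.rev_lt_rev.mpr hij)

theorem Matrix.norm_apply_le_l2_opNorm {𝕜 m n : Type*} [RCLike 𝕜] [Fintype m] [Fintype n]
    [DecidableEq n] (X : Matrix m n 𝕜) (i : m) (j : n) : ‖X i j‖ ≤ ‖X‖ := by
  have h := X.l2_opNorm_mulVec (EuclideanSpace.single j 1)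
  rw [PiLp.norm_single, norm_one, mul_one] at h
  calc ‖X i j‖ = ‖(EuclideanSpace.equiv m 𝕜).symm (X.mulVec (EuclideanSpace.single j 1)) i‖ :=
        by simp
    _ ≤ _ := PiLp.norm_apply_le _ i
    _ ≤ ‖X‖ := h

theorem Matrix.l2_opNorm_diagonal_diag_le {𝕜 n : Type*} [RCLike 𝕜] [Fintype n] [DecidableEq n]
    (X : Matrix n n 𝕜) : ‖diagonal X.diag‖ ≤ ‖X‖ := by
  rw [l2_opNorm_diagonal]
  exact pi_norm_le_iff_of_nonneg (norm_nonneg X) |>.mpr fun i => X.norm_apply_le_l2_opNorm i i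

theorem spectrum.norm_le_toReal_spectralRadius {𝕜 A : Type*} [NormedField 𝕜] [NormedRing A]
    [NormedAlgebra 𝕜 A] [NormOneClass A] [CompleteSpace A] {a : A} {z : 𝕜}
    (hz : z ∈ spectrum 𝕜 a) : ‖z‖ ≤ (spectralRadius 𝕜 a).toReal :=
  ENNReal.toReal_mono (ne_top_of_le_ne_top ENNReal.coe_ne_top (spectralRadius_le_nnnorm a))
    (le_iSup₂ (α := ENNReal) z hz)

section ExpSmul

variable {𝔸 : Type*} [NormedRing 𝔸] [NormedAlgebra ℝ 𝔸] [CompleteSpace 𝔸]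

theorem exp_smul_mul_exp_smul (a b : ℝ) (X : 𝔸) :
    exp (a • X) * exp (b • X) = exp ((a + b) • X) := by
  let : NormedAlgebra ℚ 𝔸 := .restrictScalars ℚ ℝ 𝔸
  rw [add_smul, NormedSpace.exp_add_of_commute (((Commute.refl X).smul_left a).smul_right b)]

theorem continuous_exp_smul (X : 𝔸) : Continuous fun s : ℝ => exp (s • X) :=
  (differentiable_exp_smul_const ℝ X).continuous

theorem eq_exp_smul_mul_of_hasDerivAt (T : 𝔸) {S : ℝ → 𝔸} (hS : ∀ s, HasDerivAt S (T * S s) s)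
    (t : ℝ) : S t = exp (t • T) * S 0 := by
  set ψ : ℝ → 𝔸 := fun s => exp ((t - s) • T) * S s
  have hψ : ∀ s, HasDerivAt ψ 0 s := fun s => by
    have hE : HasDerivAt (fun s => exp ((t - s) • T)) (-(exp ((t - s) • T) * T)) s :=
      ((hasDerivAt_exp_smul_const T (t - s)).scomp s ((hasDerivAt_id s).const_sub t)).congr_deriv
        (by simp)
    exact (hE.mul (hS s)).congr_deriv (by simp [mul_assoc])
  simpa [ψ] using is_const_of_deriv_eq_zero (fun s => (hψ s).differentiableAt)
    (fun s => (hψ s).deriv) t 0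

end ExpSmul

section Dyson

variable {𝔸 : Type*} [NormedRing 𝔸] [NormedAlgebra ℝ 𝔸]

noncomputable def dysonTerm (D N : 𝔸) : ℕ → ℝ → 𝔸
  | 0, s => exp (s • D)
  | k + 1, s => exp (s • D) * ∫ u in (0 : ℝ)..s, exp ((-u) • D) * N * dysonTerm D N k u

variable (D N : 𝔸)

theorem dysonTerm_zero (s : ℝ) : dysonTerm D N 0 s = exp (s • D) := rfl

theorem dysonTerm_succ (k : ℕ) (s : ℝ) : dysonTerm D N (k + 1) s =
    exp (s • D) * ∫ u in (0 : ℝ)..s, exp ((-u) • D) * N * dysonTerm D N k u := rfl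

variable [CompleteSpace 𝔸]

theorem continuous_dysonTerm (k : ℕ) : Continuous (dysonTerm D N k) := by
  induction k with
  | zero => exact continuous_exp_smul D
  | succ k ih =>
    refine (continuous_exp_smul D).mul (intervalIntegral.continuous_primitive
      (fun a b => Continuous.intervalIntegrable ?_ a b) 0)
    exact (((continuous_exp_smul D).comp continuous_neg).mul continuous_const).mul ih

theorem continuous_exp_neg_smul_mul_dysonTerm (k : ℕ) :
    Continuous fun u : ℝ => exp ((-u) • D) * N * dysonTerm D N k u :=
  (((continuous_exp_smul D).comp continuous_neg).mul continuous_const).mul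
    (continuous_dysonTerm D N k)

theorem hasDerivAt_dysonTerm_succ (k : ℕ) (s : ℝ) :
    HasDerivAt (dysonTerm D N (k + 1))
      (D * dysonTerm D N (k + 1) s + N * dysonTerm D N k s) s := by
  have hg := continuous_exp_neg_smul_mul_dysonTerm D N k
  have hG := intervalIntegral.integral_hasDerivAt_right (hg.intervalIntegrable 0 s)
    hg.stronglyMeasurable.stronglyMeasurableAtFilter hg.continuousAt
  refine ((hasDerivAt_exp_smul_const' D s).mul hG).congr_deriv ?_
  rw [dysonTerm_succ, mul_assoc, ← mul_assoc (exp (s • D)), ← mul_assoc (exp (s • D)),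
    exp_smul_mul_exp_smul, add_neg_cancel, zero_smul, NormedSpace.exp_zero, one_mul]

theorem dysonTerm_succ_eq_integral (k : ℕ) (s : ℝ) :
    dysonTerm D N (k + 1) s = ∫ u in (0 : ℝ)..s, exp ((s - u) • D) * N * dysonTerm D N k u := by
  have h := (ContinuousLinearMap.mul ℝ 𝔸 (exp (s • D))).intervalIntegral_comp_comm
    ((continuous_exp_neg_smul_mul_dysonTerm D N k).intervalIntegrable
      (μ := MeasureTheory.volume) 0 s)
  simp only [ContinuousLinearMap.mul_apply'] at h
  simp only [dysonTerm_succ, ← h, ← mul_assoc, exp_smul_mul_exp_smul, sub_eq_add_neg]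

theorem exp_smul_add_eq_sum_dysonTerm (n : ℕ) (hN : ∀ s, N * dysonTerm D N n s = 0) (t : ℝ) :
    exp (t • (D + N)) = ∑ k ∈ range (n + 1), dysonTerm D N k t := by
  set S : ℝ → 𝔸 := fun s => ∑ k ∈ range (n + 1), dysonTerm D N k s
  have hS : ∀ s, HasDerivAt S ((D + N) * S s) s := fun s => by
    have h := (hasDerivAt_exp_smul_const' D s : HasDerivAt (dysonTerm D N 0) _ s).add
      (HasDerivAt.fun_sum fun k (_ : k ∈ range n) => hasDerivAt_dysonTerm_succ D N k s)
    have hfirst : ∀ s, S s = dysonTerm D N 0 s + ∑ k ∈ range n, dysonTerm D N (k + 1) s :=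
      fun s => by simp only [S, sum_range_succ', add_comm]
    have hlast : S s = ∑ k ∈ range n, dysonTerm D N k s + dysonTerm D N n s := sum_range_succ ..
    have hDS : D * S s = D * exp (s • D) + ∑ k ∈ range n, D * dysonTerm D N (k + 1) s := by
      rw [hfirst, mul_add, mul_sum, dysonTerm_zero]
    have hNS : N * S s = ∑ k ∈ range n, N * dysonTerm D N k s := by
      rw [hlast, mul_add, hN, add_zero, mul_sum]
    refine (h.congr_of_eventuallyEq (Filter.Eventually.of_forall hfirst)).congr_deriv ?_
    rw [add_mul, hDS, hNS, add_assoc, sum_add_distrib]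
  have hS0 : S 0 = 1 := by
    simp [S, sum_range_succ', dysonTerm_succ_eq_integral, dysonTerm_zero]
  simpa [hS0] using (eq_exp_smul_mul_of_hasDerivAt (D + N) hS t).symm

theorem norm_dysonTerm_le {α : ℝ} (hD : ∀ s, 0 ≤ s → ‖exp (s • D)‖ ≤ Real.exp (s * α))
    (k : ℕ) {s : ℝ} (hs : 0 ≤ s) :
    ‖dysonTerm D N k s‖ ≤ Real.exp (s * α) * (s * ‖N‖) ^ k / k ! := by
  induction k generalizing s with
  | zero => simpa [dysonTerm_zero] using hD s hs
  | succ k ih =>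
    have hbound : ∀ u ∈ Set.Ioc 0 s, ‖exp ((s - u) • D) * N * dysonTerm D N k u‖ ≤
        Real.exp (s * α) * ‖N‖ ^ (k + 1) / k ! * u ^ k := fun u ⟨hu0, hus⟩ =>
      calc ‖exp ((s - u) • D) * N * dysonTerm D N k u‖
          ≤ ‖exp ((s - u) • D)‖ * ‖N‖ * ‖dysonTerm D N k u‖ := norm_mul₃_le
        _ ≤ Real.exp ((s - u) * α) * ‖N‖ * (Real.exp (u * α) * (u * ‖N‖) ^ k / k !) := by
          gcongr
          · exact hD _ (by linarith)
          · exact ih hu0.le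
        _ = Real.exp (s * α) * ‖N‖ ^ (k + 1) / k ! * u ^ k := by
          rw [show s * α = (s - u) * α + u * α by ring, Real.exp_add]; ring
    rw [dysonTerm_succ_eq_integral]
    refine (intervalIntegral.norm_integral_le_of_norm_le hs (Filter.Eventually.of_forall hbound)
      ((continuous_const.mul (continuous_pow k)).intervalIntegrable 0 s)).trans_eq ?_
    rw [intervalIntegral.integral_const_mul, integral_pow, factorial_succ]
    push_cast
    field_simp
    ring

end Dyson

namespace Matrix

variable {R : Type*} {m : ℕ}

def VanishesBelowSuperdiag [Zero R] (k : ℕ) (X : Matrix (Fin m) (Fin m) R) : Prop :=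
  ∀ i j : Fin m, (j : ℕ) < i + k → X i j = 0

namespace VanishesBelowSuperdiag

theorem of_isUpperTriangular [Zero R] {X : Matrix (Fin m) (Fin m) R} (hX : X.IsUpperTriangular) :
    X.VanishesBelowSuperdiag 0 :=
  fun i j hij => hX (by simpa using hij)

theorem eq_zero [Zero R] {k : ℕ} {X : Matrix (Fin m) (Fin m) R} (h : X.VanishesBelowSuperdiag k)
    (hk : m ≤ k) : X = 0 := by
  ext i j
  exact h i j (by omega)

theorem mul [NonUnitalNonAssocSemiring R] {a b : ℕ} {X Y : Matrix (Fin m) (Fin m) R}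
    (hX : X.VanishesBelowSuperdiag a) (hY : Y.VanishesBelowSuperdiag b) :
    (X * Y).VanishesBelowSuperdiag (a + b) := fun i j hij => by
  rw [mul_apply]
  refine Finset.sum_eq_zero fun p _ => ?_
  by_cases hp : (p : ℕ) < i + a
  · rw [hX i p hp, zero_mul]
  · rw [hY p j (by omega), mul_zero]

theorem intervalIntegral {k : ℕ} {f : ℝ → Matrix (Fin m) (Fin m) ℂ}
    (hf : ∀ u, (f u).VanishesBelowSuperdiag k) (a b : ℝ) :
    (∫ u in a..b, f u).VanishesBelowSuperdiag k := by
  by_cases hfi : IntervalIntegrable f MeasureTheory.volume a b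
  · intro i j hij
    have h := (entryLinearMap ℝ ℂ i j).toContinuousLinearMap.intervalIntegral_comp_comm hfi
    simp only [LinearMap.coe_toContinuousLinearMap', entryLinearMap_apply] at h
    simp [← h, hf _ i j hij]
  · rw [intervalIntegral.integral_undef hfi]
    exact fun _ _ _ => rfl

end VanishesBelowSuperdiag

theorem IsUpperTriangular.vanishesBelowSuperdiag_dysonTerm {D N : Matrix (Fin m) (Fin m) ℂ}
    (hD : D.IsUpperTriangular) (hN : N.VanishesBelowSuperdiag 1) (k : ℕ) (s : ℝ) :
    (dysonTerm D N k s).VanishesBelowSuperdiag k := by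
  have hexp : ∀ u : ℝ, (exp (u • D)).VanishesBelowSuperdiag 0 := fun u =>
    .of_isUpperTriangular (BlockTriangular.exp fun i j hij => by simp [hD hij])
  induction k generalizing s with
  | zero => exact hexp s
  | succ k ih =>
    have h := (hexp s).mul
      (VanishesBelowSuperdiag.intervalIntegral (fun u => ((hexp (-u)).mul hN).mul (ih u)) 0 s)
    rwa [zero_add, zero_add, add_comm, ← dysonTerm_succ] at h

theorem exp_smul_diagonal (s : ℝ) (d : Fin m → ℂ) :
    exp (s • diagonal d) = diagonal fun i => Complex.exp (s * d i) := by
  rw [← diagonal_smul, exp_diagonal]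
  congr 1
  ext i
  simp [Complex.exp_eq_exp_ℂ, Complex.real_smul]

theorem norm_exp_smul_diagonal_le {d : Fin m → ℂ} {α : ℝ} (hα : ∀ i, (d i).re ≤ α) {s : ℝ}
    (hs : 0 ≤ s) : ‖exp (s • diagonal d)‖ ≤ Real.exp (s * α) := by
  rw [exp_smul_diagonal, l2_opNorm_diagonal]
  refine pi_norm_le_iff_of_nonneg (Real.exp_nonneg _) |>.mpr fun i => ?_
  rw [Complex.norm_exp, Complex.re_ofReal_mul]
  gcongr
  exact hα i

theorem IsUpperTriangular.diag_mem_spectrum {R n : Type*} [CommRing R] [Nontrivial R]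
    [Fintype n] [DecidableEq n] [LinearOrder n] {X : Matrix n n R} (hX : X.IsUpperTriangular)
    (i : n) : X i i ∈ spectrum R X := by
  refine mem_spectrum_of_isRoot_charpoly ?_
  rw [charpoly_of_isUpperTriangular X hX, Polynomial.IsRoot, Polynomial.eval_prod]
  exact prod_eq_zero (mem_univ i) (by simp)

theorem IsUpperTriangular.norm_exp_smul_le {n : ℕ} {T : Matrix (Fin (n + 1)) (Fin (n + 1)) ℂ}
    (hT : T.IsUpperTriangular) {α : ℝ} (hα : ∀ i, (T i i).re ≤ α) {t : ℝ} (ht : 0 ≤ t) :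
    ‖exp (t • T)‖ ≤
      Real.exp (t * α) * ∑ k ∈ range (n + 1), (t * ‖T - diagonal T.diag‖) ^ k / k ! := by
  set D := diagonal T.diag
  set N := T - D
  have hN : N.VanishesBelowSuperdiag 1 := fun i j hij => by
    rcases (Nat.lt_succ_iff.mp hij).lt_or_eq with h | h
    · simp [N, D, hT (show j < i from h), diagonal_apply_ne _ (Fin.ne_of_lt h).symm]
    · simp [N, D, Fin.ext h]
  have hNF : ∀ s, N * dysonTerm D N n s = 0 := fun s =>
    (hN.mul (IsUpperTriangular.vanishesBelowSuperdiag_dysonTerm (blockTriangular_diagonal _) hN n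
      s)).eq_zero (by omega)
  rw [← add_sub_cancel D T, exp_smul_add_eq_sum_dysonTerm D N n hNF, mul_sum]
  exact (norm_sum_le _ _).trans (sum_le_sum fun k _ => by
    simpa [mul_div_assoc] using
      norm_dysonTerm_le D N (fun s hs => norm_exp_smul_diagonal_le hα hs) k ht)

theorem IsUpperTriangular.norm_exp_smul_le_spectralRadius_mul {n : ℕ}
    {T : Matrix (Fin (n + 1)) (Fin (n + 1)) ℂ} (hT : T.IsUpperTriangular) {t : ℝ} (ht : 0 ≤ t) :
    ‖exp (t • T)‖ ≤ (spectralRadius ℂ (exp (t • T))).toReal *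
      ∑ k ∈ range (n + 1), (2 * t) ^ k / k ! * ‖T‖ ^ k := by
  obtain ⟨i, hi⟩ := Finite.exists_max fun i => (T i i).re
  have hρ : Real.exp (t * (T i i).re) ≤ (spectralRadius ℂ (exp (t • T))).toReal := by
    have htT : (t • T).IsUpperTriangular := fun i j hij => by simp [hT hij]
    have hspec := spectrum.exp_mem_exp (t • T) (htT.diag_mem_spectrum i)
    simpa [← Complex.exp_eq_exp_ℂ, Complex.norm_exp, Complex.real_smul] using
      spectrum.norm_le_toReal_spectralRadius hspec
  have hN : ‖T - diagonal T.diag‖ ≤ 2 * ‖T‖ := by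
    linarith [norm_sub_le T (diagonal T.diag), l2_opNorm_diagonal_diag_le T]
  refine (hT.norm_exp_smul_le hi ht).trans (mul_le_mul hρ (sum_le_sum fun k _ => ?_)
    (sum_nonneg fun k _ => by positivity) (by positivity))
  calc (t * ‖T - diagonal T.diag‖) ^ k / k ! ≤ (t * (2 * ‖T‖)) ^ k / k ! := by gcongr
    _ = (2 * t) ^ k / k ! * ‖T‖ ^ k := by ring

end Matrix

/-- **Shilov's inequality**: for an `m × m` complex matrix `A` (with the operator norm
induced by the Euclidean norm on `ℂ^m`) and `t ≥ 0`,
`‖exp(tA)‖ ≤ ρ(exp(tA)) · (1 + ∑_{k=1}^{m-1} (2t)^k/k! · ‖A‖^k)`. -/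
theorem shilov_inequality (m : ℕ) (hm : 1 ≤ m)
    (A : Matrix (Fin m) (Fin m) ℂ) (t : ℝ) (ht : 0 ≤ t) :
    ‖NormedSpace.exp (t • A)‖ ≤
      (spectralRadius ℂ (NormedSpace.exp (t • A))).toReal *
        (1 + ∑ k ∈ Finset.Icc 1 (m - 1), (2 * t) ^ k / (Nat.factorial k) * ‖A‖ ^ k) := by
  obtain ⟨n, rfl⟩ := Nat.exists_eq_add_of_le' hm
  obtain ⟨U, hU, hT⟩ := A.exists_mem_unitaryGroup_isUpperTriangular
  set T := star U * A * U
  set u := Unitary.toUnits (⟨U, hU⟩ : unitary (Matrix (Fin (n + 1)) (Fin (n + 1)) ℂ))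
  have hu : ∀ X, u * X * (↑u⁻¹ : Matrix (Fin (n + 1)) (Fin (n + 1)) ℂ) = U * X * star U :=
    fun X => rfl
  have hnorm : ∀ X, ‖U * X * star U‖ = ‖X‖ := fun X => by
    rw [CStarRing.norm_mul_mem_unitary _ (Unitary.star_mem hU),
      CStarRing.norm_mem_unitary_mul _ hU]
  have hA : U * T * star U = A := by
    simp only [T, ← mul_assoc, Unitary.mul_star_self_of_mem hU, one_mul]
    simp only [mul_assoc, Unitary.mul_star_self_of_mem hU, mul_one]
  have hexp : exp (t • A) = U * exp (t • T) * star U := by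
    rw [← hA, ← smul_mul_assoc, ← mul_smul_comm, ← hu, Matrix.exp_units_conj, hu]
  have hρ : spectralRadius ℂ (exp (t • A)) = spectralRadius ℂ (exp (t • T)) := by
    rw [hexp, ← hu, spectralRadius, spectrum.units_conjugate, spectralRadius]
  have hsum : 1 + ∑ k ∈ Icc 1 (n + 1 - 1), (2 * t) ^ k / k ! * ‖A‖ ^ k =
      ∑ k ∈ range (n + 1), (2 * t) ^ k / k ! * ‖A‖ ^ k := by
    rw [sum_range_succ', Nat.add_sub_cancel, ← Ico_add_one_right_eq_Icc, sum_Ico_eq_sum_range]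
    simp [add_comm]
  rw [hsum, hρ, hexp, hnorm, ← hA, hnorm]
  exact hT.norm_exp_smul_le_spectralRadius_mul ht
end

section
/- Let m, n ≥ 1, let s₀ ∈ ℝ, and let A : ℝⁿ → M_m(ℂ) be a function such that there exist C > 0 and l ∈ ℕ with ‖A(ξ)‖ ≤ C(1+|ξ|)^l for all ξ ∈ ℝⁿ, and such that max{Re λ : λ ∈ σ(A(ξ))} ≤ s₀ for all ξ ∈ ℝⁿ. Then there exists k ∈ ℕ (one may take k = l(m−1)) such that for every ε > 0, sup{e^{−(s₀+ε)t}(1+|ξ|)^{−k}‖exp(tA(ξ))‖ : t ≥ 0, ξ ∈ ℝⁿ} < ∞. -/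
/-!
Shilov's estimate: if `B` is annihilated by `∏ᵢ (X - μᵢ)` with `Re μᵢ ≤ s₀` and `‖B - μᵢ‖ ≤ a`,
then `‖exp (tB)‖ ≤ e^{s₀ t} ∑_{j < deg} (at)^j / j!`. One factor is peeled off at a time: by
Duhamel's formula `exp (tB) V = e^{tμ} V + ∫₀ᵗ e^{(t-s)μ} exp (sB) (B - μ) V ds`, a bound for
`exp (sB) (B - μ) V` integrates to one for `exp (tB) V`. For a matrix one takes the
characteristic polynomial (Cayley–Hamilton), whose roots lie in the spectrum, and `a = 2‖B‖`.
Under `‖A(ξ)‖ ≤ C (1 + |ξ|)^l` the resulting sum is at most `(1 + |ξ|)^{l(m-1)}` times a polynomial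
in `t`, which `e^{-εt}` absorbs.
-/

open Polynomial NormedSpace
open scoped Nat Matrix.Norms.L2Operator

noncomputable def expPartialSum (n : ℕ) (x : ℝ) : ℝ := ∑ j ∈ Finset.range n, x ^ j / j !

theorem expPartialSum_nonneg (n : ℕ) {x : ℝ} (hx : 0 ≤ x) : 0 ≤ expPartialSum n x :=
  Finset.sum_nonneg fun j _ => by positivity

@[simp]
theorem expPartialSum_succ_zero (n : ℕ) : expPartialSum (n + 1) 0 = 1 := by
  simp [expPartialSum, Finset.sum_range_succ']

theorem hasDerivAt_expPartialSum_succ (n : ℕ) (x : ℝ) :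
    HasDerivAt (expPartialSum (n + 1)) (expPartialSum n x) x := by
  have h : expPartialSum (n + 1) =
      fun y : ℝ => ∑ j ∈ Finset.range n, y ^ (j + 1) / (j + 1)! + 1 := by
    funext y; simp [expPartialSum, Finset.sum_range_succ']
  rw [h]
  refine ((HasDerivAt.fun_sum fun j _ => (hasDerivAt_pow (j + 1) x).div_const _).add_const
    1).congr_deriv (Finset.sum_congr rfl fun j _ => ?_)
  rw [Nat.factorial_succ]; push_cast; field_simp

theorem expPartialSum_le_pow_mul {n : ℕ} {r x y : ℝ} (hr : 1 ≤ r) (hy : 0 ≤ y)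
    (hyx : y ≤ r * x) : expPartialSum n y ≤ r ^ (n - 1) * expPartialSum n x := by
  have hx : 0 ≤ x := nonneg_of_mul_nonneg_right (hy.trans hyx) (by linarith)
  rw [expPartialSum, expPartialSum, Finset.mul_sum]
  refine Finset.sum_le_sum fun j hj => ?_
  have hjn : j ≤ n - 1 := Nat.le_sub_one_of_lt (Finset.mem_range.1 hj)
  calc y ^ j / j ! ≤ (r * x) ^ j / j ! := by gcongr
    _ = r ^ j * (x ^ j / j !) := by rw [mul_pow, mul_div_assoc]
    _ ≤ r ^ (n - 1) * (x ^ j / j !) := by gcongr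

theorem exp_neg_mul_mul_expPartialSum_le {n : ℕ} {ε c t : ℝ} (hε : 0 < ε) (hc : 0 ≤ c)
    (ht : 0 ≤ t) :
    Real.exp (-(ε * t)) * expPartialSum n (c * t) ≤ ∑ j ∈ Finset.range n, (c / ε) ^ j := by
  rw [expPartialSum, Finset.mul_sum]
  refine Finset.sum_le_sum fun j _ => ?_
  have hexp : (ε * t) ^ j / j ! ≤ Real.exp (ε * t) :=
    Real.pow_div_factorial_le_exp (x := ε * t) (mul_nonneg hε.le ht) j
  calc Real.exp (-(ε * t)) * ((c * t) ^ j / j !)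
      = (c / ε) ^ j * ((ε * t) ^ j / j ! / Real.exp (ε * t)) := by
        rw [Real.exp_neg, div_pow, mul_pow, mul_pow]
        field_simp
    _ ≤ (c / ε) ^ j * 1 := by gcongr; exact div_le_one_of_le₀ hexp (Real.exp_pos _).le
    _ = (c / ε) ^ j := mul_one _

section BanachAlgebra

variable {𝔸 : Type*} [NormedRing 𝔸] [NormedAlgebra ℂ 𝔸] [CompleteSpace 𝔸]

theorem hasDerivAt_cexp_smul_exp_smul_mul (B V : 𝔸) (μ : ℂ) (t s : ℝ) :
    HasDerivAt (fun u : ℝ => Complex.exp (↑(t - u) * μ) • (exp (u • B) * V))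
      (Complex.exp (↑(t - s) * μ) • (exp (s • B) * ((B - algebraMap ℂ 𝔸 μ) * V))) s := by
  have hc : HasDerivAt (fun u : ℝ => Complex.exp (↑(t - u) * μ))
      (Complex.exp (↑(t - s) * μ) * -μ) s := by
    simpa using (((hasDerivAt_id s).const_sub t).ofReal_comp.mul_const μ).cexp
  have hF : HasDerivAt (fun u : ℝ => exp (u • B) * V) (exp (s • B) * B * V) s :=
    (hasDerivAt_exp_smul_const B s).mul_const V
  refine (hc.smul hF).congr_deriv ?_
  simp only [Algebra.algebraMap_eq_smul_one, sub_mul, mul_sub, smul_mul_assoc, one_mul,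
    mul_smul_comm, mul_assoc, smul_sub, smul_smul, mul_neg, neg_smul]
  abel

theorem norm_exp_smul_mul_le_succ {B V : 𝔸} {μ : ℂ} {s₀ a : ℝ} {n : ℕ} (hμ : μ.re ≤ s₀)
    (ha : ‖B - algebraMap ℂ 𝔸 μ‖ ≤ a)
    (hW : ∀ s, 0 ≤ s → ‖exp (s • B) * ((B - algebraMap ℂ 𝔸 μ) * V)‖ ≤
      Real.exp (s₀ * s) * expPartialSum n (a * s) * ‖(B - algebraMap ℂ 𝔸 μ) * V‖)
    {t : ℝ} (ht : 0 ≤ t) :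
    ‖exp (t • B) * V‖ ≤ Real.exp (s₀ * t) * expPartialSum (n + 1) (a * t) * ‖V‖ := by
  have ha0 : 0 ≤ a := (norm_nonneg _).trans ha
  have norm_cexp_smul : ∀ s : ℝ, ∀ X : 𝔸,
      ‖Complex.exp (↑(t - s) * μ) • X‖ = Real.exp ((t - s) * μ.re) * ‖X‖ := by
    intro s X; rw [norm_smul, Complex.norm_exp, Complex.re_ofReal_mul]
  -- `s ↦ e^{(t-s)μ} exp (sB) V` runs from `e^{tμ} V` to `exp (tB) V`; its derivative is
  -- fenced by that of the claimed bound.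
  have hf := hasDerivAt_cexp_smul_exp_smul_mul B V μ t
  have hβ : ∀ u, HasDerivAt (fun u => Real.exp (s₀ * t) * expPartialSum (n + 1) (a * u) * ‖V‖)
      (Real.exp (s₀ * t) * (expPartialSum n (a * u) * a) * ‖V‖) u := fun u =>
    (((hasDerivAt_expPartialSum_succ n (a * u)).comp u
      (by simpa using (hasDerivAt_id u).const_mul a)).const_mul _).mul_const _
  have key := image_norm_le_of_norm_deriv_right_le_deriv_boundary
    (fun s _ => (hf s).continuousAt.continuousWithinAt) (fun s _ => (hf s).hasDerivWithinAt)
    ?_ hβ ?_ (Set.right_mem_Icc.2 ht)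
  · simpa using key
  · rw [norm_cexp_smul]
    simp only [zero_smul, exp_zero, one_mul, mul_zero, expPartialSum_succ_zero, mul_one, sub_zero]
    exact mul_le_mul_of_nonneg_right (Real.exp_le_exp.2 (by nlinarith)) (norm_nonneg V)
  · rintro s ⟨hs0, hst⟩
    rw [norm_cexp_smul]
    calc Real.exp ((t - s) * μ.re) * ‖exp (s • B) * ((B - algebraMap ℂ 𝔸 μ) * V)‖
        ≤ Real.exp ((t - s) * μ.re) * (Real.exp (s₀ * s) * expPartialSum n (a * s) *
            (a * ‖V‖)) := by
          gcongr
          refine (hW s hs0).trans ?_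
          have := expPartialSum_nonneg n (mul_nonneg ha0 hs0)
          gcongr
          exact (norm_mul_le _ _).trans (by gcongr)
      _ = Real.exp ((t - s) * μ.re + s₀ * s) * (expPartialSum n (a * s) * a) * ‖V‖ := by
          rw [Real.exp_add]; ring
      _ ≤ Real.exp (s₀ * t) * (expPartialSum n (a * s) * a) * ‖V‖ := by
          gcongr
          · exact mul_nonneg (expPartialSum_nonneg n (mul_nonneg ha0 hs0)) ha0
          · nlinarith

theorem norm_exp_smul_mul_le_of_aeval_mul_eq_zero {B V : 𝔸} {s₀ a : ℝ} {s : Multiset ℂ}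
    (hre : ∀ μ ∈ s, μ.re ≤ s₀) (hnorm : ∀ μ ∈ s, ‖B - algebraMap ℂ 𝔸 μ‖ ≤ a)
    (hV : aeval B (s.map fun μ => X - C μ).prod * V = 0) {t : ℝ} (ht : 0 ≤ t) :
    ‖exp (t • B) * V‖ ≤ Real.exp (s₀ * t) * expPartialSum (Multiset.card s) (a * t) * ‖V‖ := by
  induction s using Multiset.induction_on generalizing V t with
  | empty => simp_all
  | cons μ s ih =>
    rw [Multiset.card_cons]
    refine norm_exp_smul_mul_le_succ (hre μ (Multiset.mem_cons_self μ s))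
      (hnorm μ (Multiset.mem_cons_self μ s)) (fun u hu => ih
        (fun ν hν => hre ν (Multiset.mem_cons_of_mem hν))
        (fun ν hν => hnorm ν (Multiset.mem_cons_of_mem hν)) ?_ hu) ht
    rwa [Multiset.map_cons, Multiset.prod_cons, mul_comm, map_mul, mul_assoc, map_sub, aeval_X,
      aeval_C] at hV

theorem norm_sub_algebraMap_le_of_mem_spectrum [NormOneClass 𝔸] {B : 𝔸} {μ : ℂ}
    (hμ : μ ∈ spectrum ℂ B) : ‖B - algebraMap ℂ 𝔸 μ‖ ≤ 2 * ‖B‖ :=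
  calc ‖B - algebraMap ℂ 𝔸 μ‖ ≤ ‖B‖ + ‖μ‖ := by
        simpa only [norm_algebraMap'] using norm_sub_le B (algebraMap ℂ 𝔸 μ)
    _ ≤ 2 * ‖B‖ := by linarith [spectrum.norm_le_norm_of_mem hμ]

end BanachAlgebra

theorem Matrix.norm_exp_smul_le {ι : Type*} [Fintype ι] [DecidableEq ι] (B : Matrix ι ι ℂ)
    {s₀ : ℝ} (hB : ∀ μ ∈ spectrum ℂ B, μ.re ≤ s₀) {t : ℝ} (ht : 0 ≤ t) :
    ‖exp (t • B)‖ ≤ Real.exp (s₀ * t) * expPartialSum (Fintype.card ι) (2 * ‖B‖ * t) := by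
  rcases isEmpty_or_nonempty ι with hι | hι
  · simp [Subsingleton.elim (exp (t • B)) 0, expPartialSum]
  have hroots : ∀ μ ∈ B.charpoly.roots, μ ∈ spectrum ℂ B := fun μ hμ =>
    Matrix.mem_spectrum_of_isRoot_charpoly (isRoot_of_mem_roots hμ)
  have hcard : Multiset.card B.charpoly.roots = Fintype.card ι :=
    (splits_iff_card_roots.mp (IsAlgClosed.splits _)).trans B.charpoly_natDegree_eq_dim
  have hann : aeval B (B.charpoly.roots.map fun μ => X - C μ).prod * 1 = 0 := by
    rw [← (IsAlgClosed.splits _).eq_prod_roots_of_monic B.charpoly_monic, mul_one,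
      Matrix.aeval_self_charpoly]
  simpa [hcard] using norm_exp_smul_mul_le_of_aeval_mul_eq_zero (fun μ hμ => hB μ (hroots μ hμ))
    (fun μ hμ => norm_sub_algebraMap_le_of_mem_spectrum (hroots μ hμ)) hann ht

theorem exp_growth_bound_of_spectral_bound_general (m n : ℕ) (s₀ : ℝ)
    (A : EuclideanSpace ℝ (Fin n) → Matrix (Fin m) (Fin m) ℂ)
    (C : ℝ) (l : ℕ)
    (hA : ∀ ξ : EuclideanSpace ℝ (Fin n), ‖A ξ‖ ≤ C * (1 + ‖ξ‖) ^ l)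
    (hspec : ∀ ξ : EuclideanSpace ℝ (Fin n), ∀ lam ∈ spectrum ℂ (A ξ), lam.re ≤ s₀) :
    ∃ k : ℕ, ∀ ε : ℝ, 0 < ε → ∃ M : ℝ,
      ∀ t : ℝ, 0 ≤ t → ∀ ξ : EuclideanSpace ℝ (Fin n),
        Real.exp (-(s₀ + ε) * t) * ((1 + ‖ξ‖) ^ k)⁻¹ *
          ‖NormedSpace.exp (t • A ξ)‖ ≤ M := by
  refine ⟨l * (m - 1), fun ε hε => ⟨∑ j ∈ Finset.range m, (2 * C / ε) ^ j, fun t ht ξ => ?_⟩⟩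
  set r := (1 + ‖ξ‖) ^ l
  have hr : 1 ≤ r := one_le_pow₀ (by linarith [norm_nonneg ξ])
  have hC : 0 ≤ C := nonneg_of_mul_nonneg_left ((norm_nonneg _).trans (hA ξ)) (by positivity)
  have hexp : ‖exp (t • A ξ)‖ ≤ Real.exp (s₀ * t) * expPartialSum m (2 * ‖A ξ‖ * t) := by
    simpa using Matrix.norm_exp_smul_le (A ξ) (hspec ξ) ht
  have hpoly : expPartialSum m (2 * ‖A ξ‖ * t) ≤ r ^ (m - 1) * expPartialSum m (2 * C * t) :=
    expPartialSum_le_pow_mul hr (by positivity) (by nlinarith [hA ξ])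
  rw [pow_mul]
  calc Real.exp (-(s₀ + ε) * t) * (r ^ (m - 1))⁻¹ * ‖exp (t • A ξ)‖
      ≤ Real.exp (-(s₀ + ε) * t) * (r ^ (m - 1))⁻¹ *
          (Real.exp (s₀ * t) * (r ^ (m - 1) * expPartialSum m (2 * C * t))) := by
        gcongr; exact hexp.trans (by gcongr)
    _ = Real.exp (-(ε * t)) * expPartialSum m (2 * C * t) := by
        rw [show -(ε * t) = -(s₀ + ε) * t + s₀ * t by ring, Real.exp_add]
        field_simp
    _ ≤ ∑ j ∈ Finset.range m, (2 * C / ε) ^ j :=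
        exp_neg_mul_mul_expPartialSum_le hε (by positivity) ht

/-- The implication (2.6) ⇒ (2.7) of Proposition 2.3: if `‖A(ξ)‖ ≤ C(1+|ξ|)^l` and
`max Re σ(A(ξ)) ≤ s₀` for all `ξ`, then there is `k ∈ ℕ` such that for every `ε > 0`,
`sup { e^{-(s₀+ε)t}(1+|ξ|)^{-k} ‖exp(tA(ξ))‖ : t ≥ 0, ξ ∈ ℝⁿ } < ∞`. -/
theorem exp_growth_bound_of_spectral_bound (m n : ℕ) (hm : 1 ≤ m) (hn : 1 ≤ n) (s₀ : ℝ)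
    (A : EuclideanSpace ℝ (Fin n) → Matrix (Fin m) (Fin m) ℂ)
    (C : ℝ) (hC : 0 < C) (l : ℕ)
    (hA : ∀ ξ : EuclideanSpace ℝ (Fin n), ‖A ξ‖ ≤ C * (1 + ‖ξ‖) ^ l)
    (hspec : ∀ ξ : EuclideanSpace ℝ (Fin n), ∀ lam ∈ spectrum ℂ (A ξ), lam.re ≤ s₀) :
    ∃ k : ℕ, ∀ ε : ℝ, 0 < ε → ∃ M : ℝ,
      ∀ t : ℝ, 0 ≤ t → ∀ ξ : EuclideanSpace ℝ (Fin n),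
        Real.exp (-(s₀ + ε) * t) * ((1 + ‖ξ‖) ^ k)⁻¹ *
          ‖NormedSpace.exp (t • A ξ)‖ ≤ M :=
  exp_growth_bound_of_spectral_bound_general m n s₀ A C l hA hspec
end

section
/- Let m, n ≥ 1, let s₀ ∈ ℝ, and let A : ℝⁿ → M_m(ℂ) be a smooth function all of whose partial derivatives are polynomially bounded, i.e. for every multi-index α ∈ ℕⁿ there exist C_α > 0 and k_α ∈ ℕ such that ‖∂^α A(ξ)‖ ≤ C_α (1+|ξ|)^{k_α} for all ξ ∈ ℝⁿ. Suppose there exists k₀ ∈ ℕ such that for every ε > 0, sup{e^{−(s₀+ε)t}(1+|ξ|)^{−k₀}‖exp(tA(ξ))‖ : t ≥ 0, ξ ∈ ℝⁿ} < ∞. Then for every multi-index α ∈ ℕⁿ there exists k_α ∈ ℕ such that for every ε > 0, sup{e^{−(s₀+ε)t}(1+|ξ|)^{−k_α}‖∂_ξ^α exp(tA(ξ))‖ : t ≥ 0, ξ ∈ ℝⁿ} < ∞. -/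
open scoped Matrix.Norms.L2Operator
open NormedSpace

noncomputable section

/-- Iterated partial derivative corresponding to the multi-index `α`. -/
noncomputable def multiPDeriv {M : Type*} [NormedAddCommGroup M] [NormedSpace ℝ M]
    (n : ℕ) (α : Fin n → ℕ) (f : EuclideanSpace ℝ (Fin n) → M) :
    EuclideanSpace ℝ (Fin n) → M :=
  (List.finRange n).foldr
    (fun i g => (fun h x => fderiv ℝ h x (EuclideanSpace.single i 1))^[α i] g) f

variable {X F : Type*} [NormedAddCommGroup X] [NormedSpace ℝ X]
  [NormedAddCommGroup F] [NormedSpace ℝ F]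

theorem clairaut (f : X → F) (hf : ContDiff ℝ (⊤ : ℕ∞) f) (u v : X) (x : X) :
    fderiv ℝ (fun y => fderiv ℝ f y v) x u = fderiv ℝ (fun y => fderiv ℝ f y u) x v := by
  have hdf : ContDiff ℝ (⊤ : ℕ∞) (fderiv ℝ f) := hf.fderiv_right (by simp)
  have h1 : ∀ w : X, fderiv ℝ (fun y => fderiv ℝ f y w) x
      = (fderiv ℝ (fderiv ℝ f) x).flip w := by
    intro w
    have := fderiv_clm_apply (hdf.differentiable (by simp) x)
      (differentiableAt_const w)
    simpa using this
  have hsymm := second_derivative_symmetric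
    (f' := fderiv ℝ f) (f'' := fderiv ℝ (fderiv ℝ f) x)
    (fun y => (hf.differentiable (by simp) y).hasFDerivAt)
    ((hdf.differentiable (by simp) x).hasFDerivAt) u v
  rw [h1 v, h1 u]
  simpa using hsymm

theorem contDiff_dirDeriv (f : X → F) (hf : ContDiff ℝ (⊤ : ℕ∞) f) (v : X) :
    ContDiff ℝ (⊤ : ℕ∞) (fun x => fderiv ℝ f x v) :=
  (hf.fderiv_right (by simp)).clm_apply contDiff_const

-- slice lemmas
variable {E : Type*} [NormedAddCommGroup E] [NormedSpace ℝ E]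

theorem hasDerivAt_slice1 (W : ℝ × E → F) (t : ℝ) (ξ : E)
    (hW : DifferentiableAt ℝ W (t, ξ)) :
    HasDerivAt (fun s => W (s, ξ)) (fderiv ℝ W (t, ξ) (1, 0)) t := by
  have hj : HasDerivAt (fun s : ℝ => (s, ξ)) ((1 : ℝ), (0 : E)) t :=
    (hasDerivAt_id t).prodMk (hasDerivAt_const t ξ)
  exact hW.hasFDerivAt.comp_hasDerivAt t hj

theorem fderiv_slice2 (W : ℝ × E → F) (t : ℝ) (ξ : E) (v : E)
    (hW : DifferentiableAt ℝ W (t, ξ)) :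
    fderiv ℝ (fun η => W (t, η)) ξ v = fderiv ℝ W (t, ξ) (0, v) := by
  have hj : HasFDerivAt (fun η : E => (t, η))
      (((0 : E →L[ℝ] ℝ)).prod (ContinuousLinearMap.id ℝ E)) ξ :=
    (hasFDerivAt_const t ξ).prodMk (hasFDerivAt_id ξ)
  have h2 : HasFDerivAt (fun η => W (t, η))
      ((fderiv ℝ W (t, ξ)).comp (((0 : E →L[ℝ] ℝ)).prod (ContinuousLinearMap.id ℝ E))) ξ :=
    hW.hasFDerivAt.comp ξ hj
  rw [h2.fderiv]
  simp

-- partial derivative operators on Euclidean space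
variable {n : ℕ}

def Dp (i : Fin n) (f : EuclideanSpace ℝ (Fin n) → F) :
    EuclideanSpace ℝ (Fin n) → F :=
  fun x => fderiv ℝ f x (EuclideanSpace.single i 1)

def DL (J : List (Fin n)) (f : EuclideanSpace ℝ (Fin n) → F) :
    EuclideanSpace ℝ (Fin n) → F :=
  J.foldr Dp f

@[simp] theorem DL_nil (f : EuclideanSpace ℝ (Fin n) → F) : DL [] f = f := rfl

@[simp] theorem DL_cons (i : Fin n) (J : List (Fin n)) (f : EuclideanSpace ℝ (Fin n) → F) :
    DL (i :: J) f = Dp i (DL J f) := rfl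

theorem DL_append (J K : List (Fin n)) (f : EuclideanSpace ℝ (Fin n) → F) :
    DL (J ++ K) f = DL J (DL K f) := by
  simp [DL, List.foldr_append]

theorem DL_contDiff {f : EuclideanSpace ℝ (Fin n) → F} (hf : ContDiff ℝ (⊤ : ℕ∞) f)
    (J : List (Fin n)) : ContDiff ℝ (⊤ : ℕ∞) (DL J f) := by
  induction J with
  | nil => exact hf
  | cons i J ih => exact contDiff_dirDeriv _ ih _

theorem Dp_comm {f : EuclideanSpace ℝ (Fin n) → F} (hf : ContDiff ℝ (⊤ : ℕ∞) f)
    (i j : Fin n) : Dp i (Dp j f) = Dp j (Dp i f) := by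
  funext x
  exact clairaut f hf _ _ x

theorem DL_perm {f : EuclideanSpace ℝ (Fin n) → F} (hf : ContDiff ℝ (⊤ : ℕ∞) f)
    {J K : List (Fin n)} (h : J.Perm K) : DL J f = DL K f := by
  induction h with
  | nil => rfl
  | cons i _ ih => simp [ih]
  | swap i j J =>
      simp only [DL_cons]
      rw [Dp_comm (DL_contDiff hf J) j i]
  | trans _ _ ih1 ih2 => rw [ih1, ih2]

theorem iterate_Dp (i : Fin n) (k : ℕ) (f : EuclideanSpace ℝ (Fin n) → F) :
    (fun h x => fderiv ℝ h x (EuclideanSpace.single i 1))^[k] f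
      = DL (List.replicate k i) f := by
  induction k with
  | zero => rfl
  | succ k ih =>
      rw [Function.iterate_succ_apply', ih, List.replicate_succ]
      rfl

/-- canonical list of a multi-index -/
def canonList (n : ℕ) (α : Fin n → ℕ) : List (Fin n) :=
  (List.finRange n).flatMap fun i => List.replicate (α i) i

theorem multiPDeriv_eq_DL (α : Fin n → ℕ) (f : EuclideanSpace ℝ (Fin n) → F) :
    multiPDeriv n α f = DL (canonList n α) f := by
  suffices h : ∀ L : List (Fin n),
      L.foldr (fun i g => (fun h x => fderiv ℝ h x (EuclideanSpace.single i 1))^[α i] g) f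
        = DL (L.flatMap fun i => List.replicate (α i) i) f by
    exact h (List.finRange n)
  intro L
  induction L with
  | nil => rfl
  | cons i L ih =>
      rw [List.foldr_cons, ih, iterate_Dp, List.flatMap_cons, DL_append]

-- permutation / counting lemmas
theorem count_canonList (α : Fin n → ℕ) (x : Fin n) :
    (canonList n α).count x = α x := by
  have h : ∀ L : List (Fin n),
      (L.flatMap fun i => List.replicate (α i) i).count x
        = (L.map fun i => if i = x then α i else 0).sum := by
    intro L
    induction L with
    | nil => simp
    | cons i L ih =>
        simp [List.flatMap_cons, List.count_append, ih, List.count_replicate]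
  rw [canonList, h]
  rw [← Fin.sum_univ_def (fun i => if i = x then α i else 0)]
  simp [Finset.sum_ite_eq]

theorem canonList_perm (J : List (Fin n)) :
    (canonList n (fun i => J.count i)).Perm J := by
  rw [List.perm_iff_count]
  intro x
  rw [count_canonList]

theorem DL_eq_multiPDeriv {f : EuclideanSpace ℝ (Fin n) → F} (hf : ContDiff ℝ (⊤ : ℕ∞) f)
    (J : List (Fin n)) :
    DL J f = multiPDeriv n (fun i => J.count i) f := by
  rw [multiPDeriv_eq_DL]
  exact (DL_perm hf (canonList_perm J)).symm

theorem DL_const' (c : F) (J : List (Fin n)) :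
    ∃ c' : F, DL J (fun _ : EuclideanSpace ℝ (Fin n) => c) = fun _ => c' := by
  induction J with
  | nil => exact ⟨c, rfl⟩
  | cons j J ih =>
      obtain ⟨c', h⟩ := ih
      refine ⟨0, ?_⟩
      rw [DL_cons, h]
      funext x
      simp [Dp, fderiv_const]

section Exp

theorem contDiff_expR (m : ℕ) :
    ContDiff ℝ (⊤ : ℕ∞) (exp : Matrix (Fin m) (Fin m) ℂ → Matrix (Fin m) (Fin m) ℂ) :=
  contDiff_iff_contDiffAt.2 fun x =>
    (analyticAt_exp_of_mem_ball (𝕂 := ℝ) x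
      (by rw [expSeries_radius_eq_top]; exact edist_lt_top _ _)).contDiffAt

variable {m : ℕ} (A : EuclideanSpace ℝ (Fin n) → Matrix (Fin m) (Fin m) ℂ)

/-- joint iterated spatial derivatives of `(t, ξ) ↦ exp (t • A ξ)` -/
def Wl : List (Fin n) → (ℝ × EuclideanSpace ℝ (Fin n) → Matrix (Fin m) (Fin m) ℂ)
  | [] => fun p => exp (p.1 • A p.2)
  | i :: J => fun p => fderiv ℝ (Wl J) p (0, EuclideanSpace.single i 1)

variable (hA : ContDiff ℝ (⊤ : ℕ∞) A)
include hA

theorem Wl_contDiff : ∀ J, ContDiff ℝ (⊤ : ℕ∞) (Wl A J)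
  | [] => (contDiff_expR m).comp (contDiff_fst.smul (hA.comp contDiff_snd))
  | i :: J => ((Wl_contDiff J).fderiv_right (by simp)).clm_apply contDiff_const

theorem Wl_slice (J : List (Fin n)) (t : ℝ) (ξ : EuclideanSpace ℝ (Fin n)) :
    DL J (fun η => exp (t • A η)) ξ = Wl A J (t, ξ) := by
  induction J generalizing ξ with
  | nil => rfl
  | cons i J ih =>
      have hfun : DL J (fun η => exp (t • A η)) = fun η => Wl A J (t, η) :=
        funext fun η => ih η
      show fderiv ℝ (DL J fun η => exp (t • A η)) ξ (EuclideanSpace.single i 1) = _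
      rw [hfun, fderiv_slice2 _ _ _ _ ((Wl_contDiff A hA J).differentiable (by simp) _)]
      rfl

theorem Wl_zero (J : List (Fin n)) (hJ : J ≠ []) (ξ : EuclideanSpace ℝ (Fin n)) :
    Wl A J (0, ξ) = 0 := by
  obtain ⟨i, J, rfl⟩ := List.exists_cons_of_ne_nil hJ
  rw [← Wl_slice A hA (i :: J) 0 ξ]
  have hconst : (fun η : EuclideanSpace ℝ (Fin n) => exp ((0:ℝ) • A η))
      = fun _ => exp (0 : Matrix (Fin m) (Fin m) ℂ) := by
    funext η; rw [zero_smul]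
  obtain ⟨c', h⟩ := DL_const' (exp (0 : Matrix (Fin m) (Fin m) ℂ)) J
  show Dp i (DL J fun η => exp ((0:ℝ) • A η)) ξ = 0
  rw [hconst, h]
  simp [Dp, fderiv_const]

/-- source-term bookkeeping for Petrovskiĭ's induction -/
def src : List (Fin n) → List (List (Fin n) × List (Fin n))
  | [] => []
  | i :: J => ([i], J) :: (src J).flatMap fun KJ => [(i :: KJ.1, KJ.2), (KJ.1, i :: KJ.2)]

omit hA in
theorem src_length : ∀ J : List (Fin n), ∀ KJ ∈ src (n := n) J, KJ.2.length < J.length := by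
  intro J
  induction J with
  | nil => intro KJ h; simp [src] at h
  | cons i J ih =>
      intro KJ h
      simp only [src, List.mem_cons, List.mem_flatMap] at h
      rcases h with h | ⟨KJ', hKJ', h⟩
      · subst h; exact Nat.lt_succ_self _
      · have := ih KJ' hKJ'
        rcases h with rfl | rfl | h
        · exact Nat.lt_succ_of_lt this
        · exact Nat.succ_lt_succ this
        · exact absurd h List.not_mem_nil

/-- the lower-order source term -/
def srcSum (ℓ : List (List (Fin n) × List (Fin n))) (p : ℝ × EuclideanSpace ℝ (Fin n)) :
    Matrix (Fin m) (Fin m) ℂ :=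
  (ℓ.map fun KJ => DL KJ.1 A p.2 * Wl A KJ.2 p).sum

theorem term_differentiable (g : EuclideanSpace ℝ (Fin n) → Matrix (Fin m) (Fin m) ℂ)
    (hg : ContDiff ℝ (⊤ : ℕ∞) g) (J : List (Fin n)) :
    Differentiable ℝ (fun q : ℝ × EuclideanSpace ℝ (Fin n) => g q.2 * Wl A J q) :=
  ((hg.differentiable (by simp)).comp differentiable_snd).mul
    ((Wl_contDiff A hA J).differentiable (by simp))

theorem term_fderiv (g : EuclideanSpace ℝ (Fin n) → Matrix (Fin m) (Fin m) ℂ)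
    (hg : ContDiff ℝ (⊤ : ℕ∞) g) (J : List (Fin n)) (p : ℝ × EuclideanSpace ℝ (Fin n)) (i : Fin n) :
    fderiv ℝ (fun q : ℝ × EuclideanSpace ℝ (Fin n) => g q.2 * Wl A J q) p
        (0, EuclideanSpace.single i 1)
      = Dp i g p.2 * Wl A J p + g p.2 * Wl A (i :: J) p := by
  have ha : DifferentiableAt ℝ (fun q : ℝ × EuclideanSpace ℝ (Fin n) => g q.2) p :=
    ((hg.differentiable (by simp)).comp differentiable_snd) p
  have hb : DifferentiableAt ℝ (Wl A J) p := (Wl_contDiff A hA J).differentiable (by simp) p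
  rw [fderiv_fun_mul' ha hb]
  have hsnd : fderiv ℝ (fun q : ℝ × EuclideanSpace ℝ (Fin n) => g q.2) p
      (0, EuclideanSpace.single i 1) = Dp i g p.2 := by
    have h1 : HasFDerivAt (fun q : ℝ × EuclideanSpace ℝ (Fin n) => g q.2)
        ((fderiv ℝ g p.2).comp (ContinuousLinearMap.snd ℝ ℝ (EuclideanSpace ℝ (Fin n)))) p :=
      ((hg.differentiable (by simp) p.2).hasFDerivAt).comp p hasFDerivAt_snd
    rw [h1.fderiv]
    rfl
  simp only [ContinuousLinearMap.add_apply, ContinuousLinearMap.smul_apply,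
    ContinuousLinearMap.smulRight_apply, hsnd, smul_eq_mul]
  have : Wl A (i :: J) p = fderiv ℝ (Wl A J) p (0, EuclideanSpace.single i 1) := rfl
  rw [this]
  exact add_comm _ _

theorem srcSum_differentiable (ℓ : List (List (Fin n) × List (Fin n))) :
    Differentiable ℝ (srcSum A ℓ) := by
  induction ℓ with
  | nil =>
      rw [show srcSum A ([] : List (List (Fin n) × List (Fin n)))
        = fun _ => (0 : Matrix (Fin m) (Fin m) ℂ) from rfl]
      exact differentiable_const _
  | cons KJ ℓ ih =>
      have : srcSum A (KJ :: ℓ) = fun q => DL KJ.1 A q.2 * Wl A KJ.2 q + srcSum A ℓ q := by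
        funext q; simp [srcSum]
      rw [this]
      exact (term_differentiable A hA _ (DL_contDiff hA KJ.1) KJ.2).add ih

theorem srcSum_fderiv (ℓ : List (List (Fin n) × List (Fin n)))
    (p : ℝ × EuclideanSpace ℝ (Fin n)) (i : Fin n) :
    fderiv ℝ (srcSum A ℓ) p (0, EuclideanSpace.single i 1)
      = (ℓ.map fun KJ => DL (i :: KJ.1) A p.2 * Wl A KJ.2 p
          + DL KJ.1 A p.2 * Wl A (i :: KJ.2) p).sum := by
  induction ℓ with
  | nil =>
      rw [show srcSum A [] = fun _ => (0 : Matrix (Fin m) (Fin m) ℂ) from rfl]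
      simp [fderiv_const]
  | cons KJ ℓ ih =>
      have hre : srcSum A (KJ :: ℓ) = fun q => DL KJ.1 A q.2 * Wl A KJ.2 q + srcSum A ℓ q := by
        funext q; simp [srcSum]
      rw [hre, fderiv_fun_add ((term_differentiable A hA _ (DL_contDiff hA KJ.1) KJ.2) p)
        ((srcSum_differentiable A hA ℓ) p)]
      simp only [ContinuousLinearMap.add_apply, List.map_cons, List.sum_cons]
      rw [term_fderiv A hA _ (DL_contDiff hA KJ.1) KJ.2 p i, ih]
      have : Dp i (DL KJ.1 A) = DL (i :: KJ.1) A := rfl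
      rw [this]

omit hA in
theorem sum_map_flatMap {γ δ M : Type*} [AddCommMonoid M] (l : List γ) (f : γ → List δ)
    (t : δ → M) :
    ((l.flatMap f).map t).sum = (l.map fun x => ((f x).map t).sum).sum := by
  induction l with
  | nil => rfl
  | cons x l ih => simp [List.flatMap_cons, List.map_append, List.sum_append, ih]

theorem time_deriv_Wl : ∀ J : List (Fin n), ∀ p : ℝ × EuclideanSpace ℝ (Fin n),
    fderiv ℝ (Wl A J) p ((1:ℝ), 0) = A p.2 * Wl A J p + srcSum A (src J) p := by
  intro J
  induction J with
  | nil =>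
      rintro ⟨t, ξ⟩
      have h1 := hasDerivAt_slice1 (Wl A []) t ξ
        ((Wl_contDiff A hA []).differentiable (by simp) _)
      have h2 : HasDerivAt (fun s : ℝ => exp (s • A ξ)) (A ξ * exp (t • A ξ)) t :=
        hasDerivAt_exp_smul_const' (A ξ) t
      have h3 : fderiv ℝ (Wl A []) (t, ξ) ((1:ℝ), 0) = A ξ * exp (t • A ξ) :=
        h1.unique h2
      rw [h3]
      rw [show srcSum A (src ([] : List (Fin n))) (t, ξ) = 0 from rfl, add_zero]
      rfl
  | cons i J ih =>
      intro p
      have hWJ := Wl_contDiff A hA J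
      have hswap : fderiv ℝ (Wl A (i :: J)) p ((1:ℝ), 0)
          = fderiv ℝ (fun q => fderiv ℝ (Wl A J) q ((1:ℝ), 0)) p
              (0, EuclideanSpace.single i 1) := by
        exact clairaut (Wl A J) hWJ _ _ p
      have hIH : (fun q => fderiv ℝ (Wl A J) q ((1:ℝ), 0))
          = fun q => A q.2 * Wl A J q + srcSum A (src J) q := funext ih
      rw [hswap, hIH]
      rw [fderiv_fun_add ((term_differentiable A hA A hA J) p)
        ((srcSum_differentiable A hA (src J)) p)]
      rw [ContinuousLinearMap.add_apply]
      rw [term_fderiv A hA A hA J p i, srcSum_fderiv A hA (src J) p i]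
      rw [show srcSum A (src (i :: J)) p
        = DL [i] A p.2 * Wl A J p
          + (((src J).flatMap fun KJ => [(i :: KJ.1, KJ.2), (KJ.1, i :: KJ.2)]).map
              fun KJ => DL KJ.1 A p.2 * Wl A KJ.2 p).sum from by
        simp [srcSum, src]]
      rw [sum_map_flatMap]
      have hterm : ((src (n := n) J).map fun KJ =>
          (([(i :: KJ.1, KJ.2), (KJ.1, i :: KJ.2)]).map
            fun KJ' => DL KJ'.1 A p.2 * Wl A KJ'.2 p).sum)
          = (src (n := n) J).map fun KJ =>
              DL (i :: KJ.1) A p.2 * Wl A KJ.2 p + DL KJ.1 A p.2 * Wl A (i :: KJ.2) p := by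
        apply List.map_congr_left
        intro KJ _
        simp
      rw [hterm]
      have hDp : Dp i A = DL [i] A := rfl
      rw [hDp]
      abel

omit hA in
theorem duhamel (P : Matrix (Fin m) (Fin m) ℂ) (v f : ℝ → Matrix (Fin m) (Fin m) ℂ)
    (hv0 : v 0 = 0) (hv : ∀ s, HasDerivAt v (P * v s + f s) s) (hf : Continuous f)
    (t : ℝ) :
    v t = ∫ s in (0:ℝ)..t, exp ((t - s) • P) * f s := by
  have hcomm : ∀ c : ℝ, Commute (exp (c • P)) P :=
    fun c => (((Commute.refl P).smul_left c)).exp_left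
  have hexp : ∀ s : ℝ, HasDerivAt (fun s : ℝ => exp ((t - s) • P))
      (-(P * exp ((t - s) • P))) s := by
    intro s
    have h1 : HasDerivAt (fun u : ℝ => exp (u • P)) (P * exp ((t - s) • P)) (t - s) :=
      hasDerivAt_exp_smul_const' P (t - s)
    have h2 : HasDerivAt (fun s : ℝ => t - s) (-1) s := by
      simpa using ((hasDerivAt_id s).const_sub t)
    have := HasDerivAt.scomp (𝕜 := ℝ) (𝕜' := ℝ) (x := s) (hg := h1) (hh := h2)
    simp at this
    exact this
  have hw : ∀ s : ℝ, HasDerivAt (fun s => exp ((t - s) • P) * v s)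
      (exp ((t - s) • P) * f s) s := by
    intro s
    have := (hexp s).mul (hv s)
    refine this.congr_deriv ?_
    have hc := (hcomm (t - s)).eq
    rw [mul_add]
    rw [neg_mul, ← mul_assoc, ← hc, mul_assoc]
    abel
  have hcont : Continuous fun s => exp ((t - s) • P) * f s := by
    have : Continuous fun s : ℝ => exp ((t - s) • P) :=
      ((contDiff_expR m).continuous).comp (by continuity)
    exact this.mul hf
  have hFTC := intervalIntegral.integral_eq_sub_of_hasDerivAt
    (f := fun s => exp ((t - s) • P) * v s)
    (fun s _ => hw s) (hcont.intervalIntegrable 0 t)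
  rw [hFTC]
  simp [hv0, sub_self, zero_smul, exp_zero]

section Bounds

variable (s₀ : ℝ) (k₀ : ℕ)
variable (hb : ∀ ε : ℝ, 0 < ε → ∃ M : ℝ, 0 ≤ M ∧ ∀ t : ℝ, 0 ≤ t →
    ∀ ξ : EuclideanSpace ℝ (Fin n),
    ‖exp (t • A ξ)‖ ≤ M * Real.exp ((s₀ + ε) * t) * (1 + ‖ξ‖) ^ k₀)
variable (hp : ∀ J : List (Fin n), ∃ C : ℝ, 0 ≤ C ∧ ∃ k : ℕ,
    ∀ ξ : EuclideanSpace ℝ (Fin n), ‖DL J A ξ‖ ≤ C * (1 + ‖ξ‖) ^ k)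

/-- the growth-bound property -/
def GB (J : List (Fin n)) : Prop :=
  ∃ k : ℕ, ∀ ε : ℝ, 0 < ε → ∃ M : ℝ, 0 ≤ M ∧ ∀ t : ℝ, 0 ≤ t →
    ∀ ξ : EuclideanSpace ℝ (Fin n),
    ‖Wl A J (t, ξ)‖ ≤ M * Real.exp ((s₀ + ε) * t) * (1 + ‖ξ‖) ^ k

omit hA in
theorem one_le_base (ξ : EuclideanSpace ℝ (Fin n)) : (1:ℝ) ≤ 1 + ‖ξ‖ := by
  have := norm_nonneg ξ; linarith

include hp in
theorem srcSum_bound (N : ℕ)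
    (IH : ∀ J' : List (Fin n), J'.length < N → GB A s₀ J')
    (ℓ : List (List (Fin n) × List (Fin n)))
    (hℓ : ∀ KJ ∈ ℓ, KJ.2.length < N) :
    ∃ k : ℕ, ∀ ε : ℝ, 0 < ε → ∃ C : ℝ, 0 ≤ C ∧ ∀ t : ℝ, 0 ≤ t →
      ∀ ξ : EuclideanSpace ℝ (Fin n),
      ‖srcSum A ℓ (t, ξ)‖ ≤ C * Real.exp ((s₀ + ε) * t) * (1 + ‖ξ‖) ^ k := by
  induction ℓ with
  | nil =>
      refine ⟨0, fun ε hε => ⟨0, le_refl 0, fun t ht ξ => ?_⟩⟩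
      rw [show srcSum A ([] : List (List (Fin n) × List (Fin n))) (t, ξ)
        = 0 from rfl]
      simp
  | cons KJ ℓ ih =>
      obtain ⟨C₁, hC₁, k₁, h₁⟩ := hp KJ.1
      obtain ⟨k₂, h₂⟩ := IH KJ.2 (hℓ KJ (List.mem_cons_self))
      obtain ⟨k₃, h₃⟩ := ih fun KJ' h => hℓ KJ' (List.mem_cons_of_mem _ h)
      refine ⟨max (k₁ + k₂) k₃, fun ε hε => ?_⟩
      obtain ⟨M₂, hM₂, h₂'⟩ := h₂ ε hε
      obtain ⟨C₃, hC₃, h₃'⟩ := h₃ ε hε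
      refine ⟨C₁ * M₂ + C₃, by positivity, fun t ht ξ => ?_⟩
      have hsplit : srcSum A (KJ :: ℓ) (t, ξ)
          = DL KJ.1 A ξ * Wl A KJ.2 (t, ξ) + srcSum A ℓ (t, ξ) := by
        simp [srcSum]
      rw [hsplit]
      have hbase := one_le_base (n := n) ξ
      have hpow12 : (1 + ‖ξ‖) ^ (k₁ + k₂) ≤ (1 + ‖ξ‖) ^ max (k₁ + k₂) k₃ :=
        pow_le_pow_right₀ hbase (le_max_left _ _)
      have hpow3 : (1 + ‖ξ‖) ^ k₃ ≤ (1 + ‖ξ‖) ^ max (k₁ + k₂) k₃ :=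
        pow_le_pow_right₀ hbase (le_max_right _ _)
      have hexp : (0:ℝ) < Real.exp ((s₀ + ε) * t) := Real.exp_pos _
      calc ‖DL KJ.1 A ξ * Wl A KJ.2 (t, ξ) + srcSum A ℓ (t, ξ)‖
          ≤ ‖DL KJ.1 A ξ * Wl A KJ.2 (t, ξ)‖ + ‖srcSum A ℓ (t, ξ)‖ := norm_add_le _ _
        _ ≤ ‖DL KJ.1 A ξ‖ * ‖Wl A KJ.2 (t, ξ)‖ + ‖srcSum A ℓ (t, ξ)‖ := by
            have := norm_mul_le (DL KJ.1 A ξ) (Wl A KJ.2 (t, ξ))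
            linarith
        _ ≤ (C₁ * (1 + ‖ξ‖) ^ k₁) * (M₂ * Real.exp ((s₀ + ε) * t) * (1 + ‖ξ‖) ^ k₂)
              + C₃ * Real.exp ((s₀ + ε) * t) * (1 + ‖ξ‖) ^ k₃ :=
            add_le_add
              (mul_le_mul (h₁ ξ) (h₂' t ht ξ) (norm_nonneg _) (by positivity))
              (h₃' t ht ξ)
        _ = C₁ * M₂ * Real.exp ((s₀ + ε) * t) * (1 + ‖ξ‖) ^ (k₁ + k₂)
              + C₃ * Real.exp ((s₀ + ε) * t) * (1 + ‖ξ‖) ^ k₃ := by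
            rw [pow_add]; ring
        _ ≤ C₁ * M₂ * Real.exp ((s₀ + ε) * t) * (1 + ‖ξ‖) ^ max (k₁ + k₂) k₃
              + C₃ * Real.exp ((s₀ + ε) * t) * (1 + ‖ξ‖) ^ max (k₁ + k₂) k₃ := by
            gcongr
        _ = (C₁ * M₂ + C₃) * Real.exp ((s₀ + ε) * t) * (1 + ‖ξ‖) ^ max (k₁ + k₂) k₃ := by
            ring

include hb hp in
theorem Wl_growth_bound : ∀ J : List (Fin n), GB A s₀ J := by
  have main : ∀ N : ℕ, ∀ J : List (Fin n), J.length ≤ N → GB A s₀ J := by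
    intro N
    induction N with
    | zero =>
        intro J hJ
        rw [List.length_eq_zero_iff.mp (Nat.le_zero.mp hJ)]
        exact ⟨k₀, fun ε hε => by
          obtain ⟨M, hM, h⟩ := hb ε hε
          exact ⟨M, hM, fun t ht ξ => h t ht ξ⟩⟩
    | succ N ihN =>
        intro J hJ
        cases J with
        | nil =>
            exact ⟨k₀, fun ε hε => by
              obtain ⟨M, hM, h⟩ := hb ε hε
              exact ⟨M, hM, fun t ht ξ => h t ht ξ⟩⟩
        | cons i J' =>
            -- source-term bound
            have hIH : ∀ J'' : List (Fin n), J''.length < (i :: J').length → GB A s₀ J'' := by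
              intro J'' h
              simp only [List.length_cons] at h hJ
              exact ihN J'' (by omega)
            obtain ⟨kf, hkf⟩ := srcSum_bound A hA s₀ hp (i :: J').length hIH
              (src (i :: J')) (src_length (i :: J'))
            refine ⟨k₀ + kf, fun ε hε => ?_⟩
            have hε2 : (0:ℝ) < ε / 2 := by linarith
            obtain ⟨M₀, hM₀, h₀⟩ := hb (ε / 2) hε2
            obtain ⟨Cf, hCf, hf⟩ := hkf (ε / 2) hε2
            refine ⟨M₀ * Cf * (2 / ε), by positivity, fun t ht ξ => ?_⟩
            -- Duhamel representation
            set f : ℝ → Matrix (Fin m) (Fin m) ℂ :=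
              fun s => srcSum A (src (i :: J')) (s, ξ) with hfdef
            have hv : ∀ s : ℝ, HasDerivAt (fun u => Wl A (i :: J') (u, ξ))
                (A ξ * Wl A (i :: J') (s, ξ) + f s) s := by
              intro s
              have h1 := hasDerivAt_slice1 (Wl A (i :: J')) s ξ
                ((Wl_contDiff A hA (i :: J')).differentiable (by simp) _)
              rwa [time_deriv_Wl A hA (i :: J') (s, ξ)] at h1
            have hfc : Continuous f :=
              ((srcSum_differentiable A hA (src (i :: J'))).continuous).comp
                (by continuity)
            have hrep := duhamel (A ξ) (fun u => Wl A (i :: J') (u, ξ)) f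
              (Wl_zero A hA (i :: J') (List.cons_ne_nil _ _) ξ) hv hfc t
            -- bound the integrand
            have hbase := one_le_base (n := n) ξ
            set Cst : ℝ := M₀ * Cf * Real.exp ((s₀ + ε / 2) * t) * (1 + ‖ξ‖) ^ (k₀ + kf)
              with hCst
            have hCst0 : 0 ≤ Cst := by positivity
            have hint : ‖∫ s in (0:ℝ)..t, exp ((t - s) • A ξ) * f s‖ ≤ Cst * |t - 0| := by
              apply intervalIntegral.norm_integral_le_of_norm_le_const
              intro s hs
              rw [Set.uIoc_of_le ht] at hs
              obtain ⟨hs0, hst⟩ := hs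
              have hs0' : (0:ℝ) ≤ s := le_of_lt hs0
              have hts : (0:ℝ) ≤ t - s := by linarith
              calc ‖exp ((t - s) • A ξ) * f s‖
                  ≤ ‖exp ((t - s) • A ξ)‖ * ‖f s‖ := norm_mul_le _ _
                _ ≤ (M₀ * Real.exp ((s₀ + ε / 2) * (t - s)) * (1 + ‖ξ‖) ^ k₀)
                      * (Cf * Real.exp ((s₀ + ε / 2) * s) * (1 + ‖ξ‖) ^ kf) :=
                    mul_le_mul (h₀ (t - s) hts ξ) (hf s hs0' ξ) (norm_nonneg _)
                      (by positivity)
                _ = (M₀ * Cf) * (Real.exp ((s₀ + ε / 2) * (t - s))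
                      * Real.exp ((s₀ + ε / 2) * s))
                      * ((1 + ‖ξ‖) ^ k₀ * (1 + ‖ξ‖) ^ kf) := by ring
                _ = Cst := by
                    rw [show Real.exp ((s₀ + ε / 2) * (t - s)) * Real.exp ((s₀ + ε / 2) * s)
                      = Real.exp ((s₀ + ε / 2) * t) from by
                        rw [← Real.exp_add]; ring_nf]
                    rw [hCst, pow_add]
            rw [hrep]
            have habs : |t - 0| = t := by rw [sub_zero, abs_of_nonneg ht]
            rw [habs] at hint
            -- absorb the factor t
            have ht2 : t ≤ (2 / ε) * Real.exp ((ε / 2) * t) := by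
              have h1 : (ε / 2) * t ≤ Real.exp ((ε / 2) * t) := by
                have := Real.add_one_le_exp ((ε / 2) * t)
                linarith
              have h2 : (2 / ε) * (ε / 2) = 1 := by
                field_simp
              calc t = ((2 / ε) * (ε / 2)) * t := by rw [h2, one_mul]
                _ = (2 / ε) * ((ε / 2) * t) := by ring
                _ ≤ (2 / ε) * Real.exp ((ε / 2) * t) := by
                    apply mul_le_mul_of_nonneg_left h1 (by positivity)
            calc ‖∫ s in (0:ℝ)..t, exp ((t - s) • A ξ) * f s‖
                ≤ Cst * t := hint
              _ ≤ Cst * ((2 / ε) * Real.exp ((ε / 2) * t)) := by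
                  exact mul_le_mul_of_nonneg_left ht2 hCst0
              _ = M₀ * Cf * (2 / ε) * (Real.exp ((s₀ + ε / 2) * t) * Real.exp ((ε / 2) * t))
                    * (1 + ‖ξ‖) ^ (k₀ + kf) := by rw [hCst]; ring
              _ = M₀ * Cf * (2 / ε) * Real.exp ((s₀ + ε) * t) * (1 + ‖ξ‖) ^ (k₀ + kf) := by
                  rw [← Real.exp_add]
                  ring_nf
  intro J
  exact main J.length J le_rfl

end Bounds

end Exp

end

theorem inv_inv_mul_le_iff_aux (a b x M : ℝ) (ha : 0 < a) (hb : 0 < b) :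
    a⁻¹ * b⁻¹ * x ≤ M ↔ x ≤ M * a * b := by
  rw [← mul_inv, mul_comm a b, inv_mul_le_iff₀ (by positivity)]
  constructor <;> intro h <;> nlinarith

/-- The implication (2.7) ⇒ (2.8) of Proposition 2.3 (Petrovskiĭ's induction): bounds on
`exp(tA(ξ))` propagate to all partial derivatives `∂_ξ^α exp(tA(ξ))`. -/
theorem deriv_exp_growth_bound_of_exp_growth_bound (m n : ℕ) (hm : 1 ≤ m) (hn : 1 ≤ n)
    (s₀ : ℝ)
    (A : EuclideanSpace ℝ (Fin n) → Matrix (Fin m) (Fin m) ℂ)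
    (hA : ContDiff ℝ (⊤ : ℕ∞) A)
    (hpoly : ∀ α : Fin n → ℕ, ∃ C : ℝ, 0 < C ∧ ∃ k : ℕ,
      ∀ ξ : EuclideanSpace ℝ (Fin n), ‖multiPDeriv n α A ξ‖ ≤ C * (1 + ‖ξ‖) ^ k)
    (k₀ : ℕ)
    (hbound : ∀ ε : ℝ, 0 < ε → ∃ M : ℝ,
      ∀ t : ℝ, 0 ≤ t → ∀ ξ : EuclideanSpace ℝ (Fin n),
        Real.exp (-(s₀ + ε) * t) * ((1 + ‖ξ‖) ^ k₀)⁻¹ *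
          ‖NormedSpace.exp (t • A ξ)‖ ≤ M) :
    ∀ α : Fin n → ℕ, ∃ k : ℕ, ∀ ε : ℝ, 0 < ε → ∃ M : ℝ,
      ∀ t : ℝ, 0 ≤ t → ∀ ξ : EuclideanSpace ℝ (Fin n),
        Real.exp (-(s₀ + ε) * t) * ((1 + ‖ξ‖) ^ k)⁻¹ *
          ‖multiPDeriv n α (fun η => NormedSpace.exp (t • A η)) ξ‖ ≤ M := by
  intro α
  have hee : (NormedSpace.exp : Matrix (Fin m) (Fin m) ℂ → Matrix (Fin m) (Fin m) ℂ)
      = NormedSpace.exp := rfl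
  -- convert the semigroup bound
  have hb' : ∀ ε : ℝ, 0 < ε → ∃ M : ℝ, 0 ≤ M ∧ ∀ t : ℝ, 0 ≤ t →
      ∀ ξ : EuclideanSpace ℝ (Fin n),
      ‖NormedSpace.exp (t • A ξ)‖ ≤ M * Real.exp ((s₀ + ε) * t) * (1 + ‖ξ‖) ^ k₀ := by
    intro ε hε
    obtain ⟨M, hM⟩ := hbound ε hε
    refine ⟨max M 0, le_max_right _ _, fun t ht ξ => ?_⟩
    have h := hM t ht ξ
    rw [neg_mul, Real.exp_neg] at h
    rw [inv_inv_mul_le_iff_aux _ _ _ _ (Real.exp_pos _) (by positivity)] at h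
    rw [hee]
    calc ‖NormedSpace.exp (t • A ξ)‖
        ≤ M * Real.exp ((s₀ + ε) * t) * (1 + ‖ξ‖) ^ k₀ := h
      _ ≤ max M 0 * Real.exp ((s₀ + ε) * t) * (1 + ‖ξ‖) ^ k₀ := by
          have h3 : M ≤ max M 0 := le_max_left _ _
          have h1 : (0:ℝ) < Real.exp ((s₀ + ε) * t) := Real.exp_pos _
          have h2 : (0:ℝ) < (1 + ‖ξ‖) ^ k₀ := by positivity
          have := mul_le_mul_of_nonneg_right
            (mul_le_mul_of_nonneg_right h3 h1.le) h2.le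
          linarith
  -- convert the polynomial bounds
  have hp' : ∀ J : List (Fin n), ∃ C : ℝ, 0 ≤ C ∧ ∃ k : ℕ,
      ∀ ξ : EuclideanSpace ℝ (Fin n), ‖DL J A ξ‖ ≤ C * (1 + ‖ξ‖) ^ k := by
    intro J
    obtain ⟨C, hC, k, h⟩ := hpoly fun i => J.count i
    refine ⟨C, le_of_lt hC, k, fun ξ => ?_⟩
    rw [DL_eq_multiPDeriv hA J]
    exact h ξ
  obtain ⟨k, hk⟩ := Wl_growth_bound A hA s₀ k₀ hb' hp' (canonList n α)
  refine ⟨k, fun ε hε => ?_⟩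
  obtain ⟨M, hM, h⟩ := hk ε hε
  refine ⟨M, fun t ht ξ => ?_⟩
  have hWl : multiPDeriv n α (fun η => NormedSpace.exp (t • A η)) ξ
      = Wl A (canonList n α) (t, ξ) := by
    rw [show (fun η => NormedSpace.exp (t • A η))
      = (fun η => NormedSpace.exp (t • A η)) from by rw [hee]]
    rw [multiPDeriv_eq_DL]
    exact Wl_slice A hA (canonList n α) t ξ
  rw [hWl, neg_mul, Real.exp_neg]
  rw [inv_inv_mul_le_iff_aux _ _ _ _ (Real.exp_pos _) (by positivity)]
  exact h t ht ξ
end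

section
/- Let m, n ≥ 1 and let 𝒢 be an m×m matrix whose entries are polynomials in n variables with complex coefficients. Suppose there exist t₀ > 0, C > 0, k > 0 and l ∈ ℕ such that ‖exp(t₀ 𝒢(iζ))‖ ≤ C(1+|ζ|)^l e^{k|Im ζ|} for all ζ ∈ ℂⁿ. Then there exists K > 0 such that max{Re λ : λ ∈ σ(𝒢(iζ))} ≤ K(1+|ζ|) for all ζ ∈ ℂⁿ. -/
open scoped Matrix.Norms.L2Operator

/-- Evaluation of a matrix of multivariate polynomials at a point of `ℂⁿ`. -/
noncomputable def polyMatEval {m n : ℕ}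
    (𝒢 : Matrix (Fin m) (Fin m) (MvPolynomial (Fin n) ℂ)) (ζ : Fin n → ℂ) :
    Matrix (Fin m) (Fin m) ℂ :=
  𝒢.map (MvPolynomial.eval ζ)

/-- The componentwise imaginary part of `ζ ∈ ℂⁿ`, regarded as a vector of `ℝⁿ`
with Euclidean norm. -/
noncomputable def imVec {n : ℕ} (ζ : EuclideanSpace ℂ (Fin n)) :
    EuclideanSpace ℝ (Fin n) :=
  WithLp.toLp 2 (fun j => (ζ j).im)

/-
Taking logarithms in `‖exp(t₀𝒢(iζ))‖ ≤ C(1+|ζ|)^l e^{k|Im ζ|}` gives a bound linear in `1+|ζ|`,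
and it controls the spectrum because, by the spectral mapping theorem, `e^{t₀λ}` lies in the
spectrum of `exp(t₀𝒢(iζ))` for every eigenvalue `λ` of `𝒢(iζ)`, so that
`e^{t₀ Re λ} = |e^{t₀λ}| ≤ ‖exp(t₀𝒢(iζ))‖`.
-/

lemma norm_imVec_le {n : ℕ} (ζ : EuclideanSpace ℂ (Fin n)) : ‖imVec ζ‖ ≤ ‖ζ‖ := by
  rw [EuclideanSpace.norm_eq, EuclideanSpace.norm_eq]
  gcongr with i
  simpa [imVec] using Complex.abs_im_le_norm (ζ i)

section CStarRing

variable {A : Type*} [NormedRing A] [StarRing A] [CStarRing A] [NormedAlgebra ℂ A]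
  [CompleteSpace A]

lemma spectrum.exp_re_le_norm_exp_of_mem {a : A} {z : ℂ} (hz : z ∈ spectrum ℂ a) :
    Real.exp z.re ≤ ‖NormedSpace.exp a‖ := by
  have : Nontrivial A :=
    not_subsingleton_iff_nontrivial.mp fun _ => by simp [spectrum.of_subsingleton] at hz
  rw [← Complex.norm_exp, Complex.exp_eq_exp_ℂ]
  exact spectrum.norm_le_norm_of_mem (spectrum.exp_mem_exp a hz)

lemma spectrum.exp_mul_re_le_norm_exp_smul_of_mem {a : A} {z : ℂ}
    (hz : z ∈ spectrum ℂ a) {t : ℝ} (ht : t ≠ 0) :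
    Real.exp (t * z.re) ≤ ‖NormedSpace.exp (t • a)‖ := by
  have hmem : (t : ℂ) * z ∈ spectrum ℂ (t • a) := by
    rw [← Complex.coe_smul, ← smul_eq_mul]
    exact spectrum.smul_mem_smul_iff (r := Units.mk0 (t : ℂ) (by exact_mod_cast ht)) |>.mpr hz
  simpa using spectrum.exp_re_le_norm_exp_of_mem hmem

end CStarRing

lemma le_mul_one_add_of_exp_le_mul_pow_mul_exp {x C k r s : ℝ} {l : ℕ} (hC : 0 < C)
    (hk : 0 ≤ k) (hr : 0 ≤ r) (hs : s ≤ r)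
    (h : Real.exp x ≤ C * (1 + r) ^ l * Real.exp (k * s)) :
    x ≤ (|Real.log C| + l + k) * (1 + r) := by
  have hlog : x ≤ Real.log C + l * Real.log (1 + r) + k * s := by
    rw [← Real.log_exp x, ← Real.log_exp (k * s), ← Real.log_pow,
      ← Real.log_mul hC.ne' (by positivity), ← Real.log_mul (by positivity) (by positivity)]
    exact Real.log_le_log (Real.exp_pos x) h
  have hlog_one_add : Real.log (1 + r) ≤ r := by
    linarith [Real.log_le_sub_one_of_pos (x := 1 + r) (by positivity)]
  have : (l : ℝ) * Real.log (1 + r) ≤ l * r := by gcongr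
  have : k * s ≤ k * r := by gcongr
  nlinarith [le_abs_self (Real.log C), abs_nonneg (Real.log C)]

theorem spectral_linear_bound_of_exp_PW_bound_general (m n : ℕ)
    (𝒢 : Matrix (Fin m) (Fin m) (MvPolynomial (Fin n) ℂ))
    (t₀ C k : ℝ) (ht₀ : 0 < t₀) (hC : 0 < C) (hk : 0 < k) (l : ℕ)
    (hbound : ∀ ζ : EuclideanSpace ℂ (Fin n),
      ‖NormedSpace.exp (t₀ • polyMatEval 𝒢 (fun j => Complex.I * ζ j))‖ ≤
        C * (1 + ‖ζ‖) ^ l * Real.exp (k * ‖imVec ζ‖)) :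
    ∃ K : ℝ, 0 < K ∧ ∀ ζ : EuclideanSpace ℂ (Fin n),
      ∀ lam ∈ spectrum ℂ (polyMatEval 𝒢 (fun j => Complex.I * ζ j)),
        lam.re ≤ K * (1 + ‖ζ‖) := by
  refine ⟨(|Real.log C| + l + k) / t₀, by positivity, fun ζ lam hlam => ?_⟩
  have hexp := (spectrum.exp_mul_re_le_norm_exp_smul_of_mem hlam ht₀.ne').trans (hbound ζ)
  have hlin := le_mul_one_add_of_exp_le_mul_pow_mul_exp hC hk.le (norm_nonneg ζ)
    (norm_imVec_le ζ) hexp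
  rw [div_mul_eq_mul_div, le_div_iff₀ ht₀]
  linarith

/-- Section 5, intermediate step: a Paley–Wiener type bound on `exp(t₀𝒢(iζ))` forces the
linear bound `max Re σ(𝒢(iζ)) ≤ K(1+|ζ|)` on all of `ℂⁿ`. -/
theorem spectral_linear_bound_of_exp_PW_bound (m n : ℕ) (hm : 1 ≤ m) (hn : 1 ≤ n)
    (𝒢 : Matrix (Fin m) (Fin m) (MvPolynomial (Fin n) ℂ))
    (t₀ C k : ℝ) (ht₀ : 0 < t₀) (hC : 0 < C) (hk : 0 < k) (l : ℕ)
    (hbound : ∀ ζ : EuclideanSpace ℂ (Fin n),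
      ‖NormedSpace.exp (t₀ • polyMatEval 𝒢 (fun j => Complex.I * ζ j))‖ ≤
        C * (1 + ‖ζ‖) ^ l * Real.exp (k * ‖imVec ζ‖)) :
    ∃ K : ℝ, 0 < K ∧ ∀ ζ : EuclideanSpace ℂ (Fin n),
      ∀ lam ∈ spectrum ℂ (polyMatEval 𝒢 (fun j => Complex.I * ζ j)),
        lam.re ≤ K * (1 + ‖ζ‖) :=
  spectral_linear_bound_of_exp_PW_bound_general m n 𝒢 t₀ C k ht₀ hC hk l hbound
end

section
/- Let m, n ≥ 1 and let 𝒢 be an m×m matrix whose entries are polynomials in n variables with complex coefficients, and let d be the maximum of the total degrees of the entries of 𝒢. Suppose there exists C > 0 such that max{|Re λ| : λ ∈ σ(𝒢(iζ))} ≤ C(1 + |Im ζ|) for all ζ ∈ ℂⁿ. Then for every k ∈ ℕ there exists D_k > 0 such that for all t ∈ ℝ and ζ ∈ ℂⁿ, ‖𝒢(iζ)^k · exp(t𝒢(iζ))‖ ≤ e^{C|t|} (1 + 2|t|)^{m−1} D_k (1+|ζ|)^{(m+k−1)d} e^{C|t|·|Im ζ|}. -/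
open scoped Matrix.Norms.L2Operator

/-!
Putzer's algorithm. Let `μ₀, …, μ_{m-1}` be the eigenvalues of `A` (with multiplicity),
`P_j = ∏_{i<j} (A - μ_i)`, and let `r_j` solve the triangular system `r₀' = μ₀ r₀`,
`r_j' = μ_j r_j + r_{j-1}`, `r₀(0) = 1`, `r_j(0) = 0`. Since `A P_j = P_{j+1} + μ_j P_j` and
`P_m = 0` (Cayley–Hamilton), `Σ_{j<m} r_j(t) P_j` solves `Φ' = AΦ`, `Φ(0) = 1`, hence equals
`exp(tA)`. If `|Re μ_i| ≤ R` then `|r_j(t)| ≤ e^{R|t|} |t|^j`, and `|μ_i| ≤ ‖A‖` gives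
`‖P_j‖ ≤ (2‖A‖)^j`, so `‖exp(tA)‖ ≤ e^{R|t|} (1 + 2|t|‖A‖)^{m-1}`. For `A = 𝒢(iζ)` one takes
`R = C(1 + |Im ζ|)` and uses `‖𝒢(iζ)‖ ≤ M (1 + |ζ|)^d`.
-/

noncomputable def putzerCoeff (μ : ℕ → ℂ) : ℕ → ℝ → ℂ
  | 0 => fun t => Complex.exp (μ 0 * t)
  | j + 1 => fun t => Complex.exp (μ (j + 1) * t) *
      ∫ s in (0 : ℝ)..t, Complex.exp (-μ (j + 1) * s) * putzerCoeff μ j s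

theorem hasDerivAt_cexp_mul_ofReal (c : ℂ) (t : ℝ) :
    HasDerivAt (fun s : ℝ => Complex.exp (c * s)) (c * Complex.exp (c * t)) t := by
  simpa [mul_comm] using ((hasDerivAt_id t).ofReal_comp.const_mul c).cexp

theorem hasDerivAt_putzerCoeff (μ : ℕ → ℂ) (j : ℕ) (t : ℝ) :
    HasDerivAt (putzerCoeff μ j)
      (μ j * putzerCoeff μ j t + if j = 0 then 0 else putzerCoeff μ (j - 1) t) t := by
  induction j generalizing t with
  | zero => simpa [putzerCoeff] using hasDerivAt_cexp_mul_ofReal (μ 0) t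
  | succ j ih =>
    have hcont : Continuous (putzerCoeff μ j) :=
      continuous_iff_continuousAt.2 fun s => (ih s).continuousAt
    have hint : HasDerivAt
        (fun u => ∫ s in (0 : ℝ)..u, Complex.exp (-μ (j + 1) * s) * putzerCoeff μ j s)
        (Complex.exp (-μ (j + 1) * t) * putzerCoeff μ j t) t :=
      (Continuous.integral_hasStrictDerivAt (by fun_prop) 0 t).hasDerivAt
    refine ((hasDerivAt_cexp_mul_ofReal (μ (j + 1)) t).mul hint).congr_deriv ?_
    simp only [putzerCoeff, Nat.add_sub_cancel, Nat.add_one_ne_zero, if_false]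
    rw [← mul_assoc (Complex.exp _), ← Complex.exp_add, neg_mul, add_neg_cancel,
      Complex.exp_zero]
    ring

theorem abs_le_abs_of_mem_uIoc_zero {s t : ℝ} (hs : s ∈ Set.uIoc 0 t) : |s| ≤ |t| := by
  rcases le_total 0 t with ht | ht
  · rw [Set.uIoc_of_le ht] at hs
    rw [abs_of_pos hs.1, abs_of_nonneg ht]
    exact hs.2
  · rw [Set.uIoc_of_ge ht] at hs
    rw [abs_of_nonpos hs.2, abs_of_nonpos ht]
    linarith [hs.1]

theorem mul_abs_sub_mul_le_of_mem_uIoc_zero {a R s t : ℝ} (ha : |a| ≤ R)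
    (hs : s ∈ Set.uIoc 0 t) : R * |s| - a * s ≤ R * |t| - a * t := by
  obtain ⟨ha₁, ha₂⟩ := abs_le.1 ha
  rcases le_total 0 t with ht | ht
  · rw [Set.uIoc_of_le ht] at hs
    rw [abs_of_pos hs.1, abs_of_nonneg ht]
    nlinarith [hs.2]
  · rw [Set.uIoc_of_ge ht] at hs
    rw [abs_of_nonpos hs.2, abs_of_nonpos ht]
    nlinarith [hs.1]

theorem norm_putzerCoeff_le {μ : ℕ → ℂ} {R : ℝ} {j : ℕ} (hμ : ∀ i ≤ j, |(μ i).re| ≤ R)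
    (t : ℝ) : ‖putzerCoeff μ j t‖ ≤ Real.exp (R * |t|) * |t| ^ j := by
  induction j generalizing t with
  | zero =>
    simpa [putzerCoeff, Complex.norm_exp] using
      (le_abs_self _).trans ((abs_mul _ _).trans_le (by gcongr; exact hμ 0 le_rfl))
  | succ j ih =>
    set a := (μ (j + 1)).re
    have hint : ‖∫ s in (0 : ℝ)..t, Complex.exp (-μ (j + 1) * s) * putzerCoeff μ j s‖ ≤
        Real.exp (R * |t| - a * t) * |t| ^ j * |t - 0| := by
      refine intervalIntegral.norm_integral_le_of_norm_le_const fun s hs => ?_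
      calc ‖Complex.exp (-μ (j + 1) * s) * putzerCoeff μ j s‖
          ≤ Real.exp (-(a * s)) * (Real.exp (R * |s|) * |s| ^ j) := by
            rw [norm_mul, Complex.norm_exp]
            simpa [a] using mul_le_mul_of_nonneg_left (ih (fun i hi => hμ i (by omega)) s)
              (Real.exp_pos _).le
        _ = Real.exp (R * |s| - a * s) * |s| ^ j := by
            rw [sub_eq_neg_add, Real.exp_add, mul_assoc]
        _ ≤ Real.exp (R * |t| - a * t) * |t| ^ j := by
            gcongr ?_ * ?_
            · exact Real.exp_le_exp.2 (mul_abs_sub_mul_le_of_mem_uIoc_zero (hμ (j + 1) le_rfl) hs)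
            · exact pow_le_pow_left₀ (abs_nonneg s) (abs_le_abs_of_mem_uIoc_zero hs) j
    calc ‖putzerCoeff μ (j + 1) t‖
        ≤ Real.exp (a * t) * (Real.exp (R * |t| - a * t) * |t| ^ j * |t - 0|) := by
          simp only [putzerCoeff, norm_mul, Complex.norm_exp]
          simpa [a] using mul_le_mul_of_nonneg_left hint (Real.exp_pos _).le
      _ = Real.exp (R * |t|) * |t| ^ (j + 1) := by
          rw [sub_zero, ← mul_assoc, ← mul_assoc, ← Real.exp_add, pow_succ]
          ring_nf

theorem exp_smul_eq_of_hasDerivAt {𝔸 : Type*} [NormedRing 𝔸] [NormedAlgebra ℝ 𝔸]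
    [CompleteSpace 𝔸] {A : 𝔸} {Φ : ℝ → 𝔸} (hΦ : ∀ t, HasDerivAt Φ (A * Φ t) t) (hΦ₀ : Φ 0 = 1)
    (t : ℝ) : NormedSpace.exp (t • A) = Φ t := by
  have hderiv (s : ℝ) : HasDerivAt (fun u => NormedSpace.exp ((t - u) • A) * Φ u) 0 s := by
    have hexp : HasDerivAt (fun u : ℝ => NormedSpace.exp ((t - u) • A))
        (-(A * NormedSpace.exp ((t - s) • A))) s := by
      simpa [Function.comp_def] using
        (hasDerivAt_exp_smul_const' A (t - s)).scomp s ((hasDerivAt_id s).const_sub t)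
    refine (hexp.mul (hΦ s)).congr_deriv ?_
    rw [← (((Commute.refl A).smul_left (t - s)).exp_left).eq]
    noncomm_ring
  simpa [hΦ₀] using is_const_of_deriv_eq_zero (fun u => (hderiv u).differentiableAt)
    (fun u => (hderiv u).deriv) 0 t

theorem geom_sum_le_one_add_pow {x : ℝ} (hx : 0 ≤ x) (N : ℕ) :
    ∑ j ∈ Finset.range (N + 1), x ^ j ≤ (1 + x) ^ N := by
  rw [add_comm 1 x, add_pow]
  refine Finset.sum_le_sum fun j hj => ?_
  have : (1 : ℝ) ≤ N.choose j :=
    mod_cast Nat.choose_pos (Nat.lt_succ_iff.1 (Finset.mem_range.1 hj))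
  simpa using le_mul_of_one_le_right (pow_nonneg hx j) this

section Putzer

open Polynomial

noncomputable def putzerPoly (μ : ℕ → ℂ) (j : ℕ) : ℂ[X] := ∏ i ∈ Finset.range j, (X - C (μ i))

variable {𝔸 : Type*} [NormedRing 𝔸] [NormedAlgebra ℂ 𝔸] {A : 𝔸} {μ : ℕ → ℂ}

theorem aeval_putzerPoly_succ (A : 𝔸) (μ : ℕ → ℂ) (j : ℕ) :
    aeval A (putzerPoly μ (j + 1)) = aeval A (putzerPoly μ j) * (A - algebraMap ℂ 𝔸 (μ j)) := by
  simp [putzerPoly, Finset.prod_range_succ]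

theorem mul_aeval_putzerPoly (A : 𝔸) (μ : ℕ → ℂ) (j : ℕ) :
    A * aeval A (putzerPoly μ j) =
      aeval A (putzerPoly μ (j + 1)) + μ j • aeval A (putzerPoly μ j) := by
  have : X * putzerPoly μ j = putzerPoly μ (j + 1) + C (μ j) * putzerPoly μ j := by
    simp only [putzerPoly, Finset.prod_range_succ]
    ring
  simpa [Algebra.smul_def] using congrArg (aeval A) this

theorem norm_aeval_putzerPoly_le [NormOneClass 𝔸] {j : ℕ} (hμ : ∀ i < j, ‖μ i‖ ≤ ‖A‖) :
    ‖aeval A (putzerPoly μ j)‖ ≤ (2 * ‖A‖) ^ j := by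
  induction j with
  | zero => simp [putzerPoly]
  | succ j ih =>
    rw [aeval_putzerPoly_succ, pow_succ]
    refine (norm_mul_le _ _).trans (mul_le_mul (ih fun i hi => hμ i (by omega)) ?_
      (norm_nonneg _) (by positivity))
    calc ‖A - algebraMap ℂ 𝔸 (μ j)‖ ≤ ‖A‖ + ‖μ j‖ := by
          simpa using norm_sub_le A (algebraMap ℂ 𝔸 (μ j))
      _ ≤ 2 * ‖A‖ := by linarith [hμ j (by omega)]

theorem hasDerivAt_sum_putzerCoeff_smul {N : ℕ} (hN : aeval A (putzerPoly μ (N + 1)) = 0)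
    (t : ℝ) :
    HasDerivAt (fun t => ∑ j ∈ Finset.range (N + 1), putzerCoeff μ j t • aeval A (putzerPoly μ j))
      (A * ∑ j ∈ Finset.range (N + 1), putzerCoeff μ j t • aeval A (putzerPoly μ j)) t := by
  refine (HasDerivAt.fun_sum fun j _ =>
    (hasDerivAt_putzerCoeff μ j t).smul_const _).congr_deriv ?_
  have hshift : ∑ j ∈ Finset.range (N + 1),
      (if j = 0 then 0 else putzerCoeff μ (j - 1) t) • aeval A (putzerPoly μ j) =
      ∑ j ∈ Finset.range N, putzerCoeff μ j t • aeval A (putzerPoly μ (j + 1)) := by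
    simp [Finset.sum_range_succ']
  have htop : ∑ j ∈ Finset.range (N + 1), putzerCoeff μ j t • aeval A (putzerPoly μ (j + 1)) =
      ∑ j ∈ Finset.range N, putzerCoeff μ j t • aeval A (putzerPoly μ (j + 1)) := by
    rw [Finset.sum_range_succ, hN, smul_zero, add_zero]
  simp only [Finset.mul_sum, mul_smul_comm, mul_aeval_putzerPoly, smul_add, add_smul,
    Finset.sum_add_distrib, hshift, htop, smul_smul, mul_comm]
  exact add_comm _ _

theorem exp_smul_eq_sum_putzerCoeff_smul [CompleteSpace 𝔸] {N : ℕ}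
    (hN : aeval A (putzerPoly μ (N + 1)) = 0) (t : ℝ) :
    NormedSpace.exp (t • A) =
      ∑ j ∈ Finset.range (N + 1), putzerCoeff μ j t • aeval A (putzerPoly μ j) := by
  refine exp_smul_eq_of_hasDerivAt (hasDerivAt_sum_putzerCoeff_smul hN) ?_ t
  rw [Finset.sum_range_succ']
  simp [putzerCoeff, putzerPoly]

theorem norm_exp_smul_le_of_aeval_putzerPoly_eq_zero [CompleteSpace 𝔸] [NormOneClass 𝔸]
    {R : ℝ} {N : ℕ} (hN : aeval A (putzerPoly μ (N + 1)) = 0)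
    (hμ : ∀ i ≤ N, μ i ∈ spectrum ℂ A) (hR : ∀ z ∈ spectrum ℂ A, |z.re| ≤ R) (t : ℝ) :
    ‖NormedSpace.exp (t • A)‖ ≤ Real.exp (R * |t|) * (1 + 2 * |t| * ‖A‖) ^ N := by
  rw [exp_smul_eq_sum_putzerCoeff_smul hN]
  calc ‖∑ j ∈ Finset.range (N + 1), putzerCoeff μ j t • aeval A (putzerPoly μ j)‖
      ≤ ∑ j ∈ Finset.range (N + 1), Real.exp (R * |t|) * |t| ^ j * (2 * ‖A‖) ^ j := by
        refine (norm_sum_le _ _).trans (Finset.sum_le_sum fun j hj => ?_)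
        have hjN : j ≤ N := Nat.lt_succ_iff.1 (Finset.mem_range.1 hj)
        rw [norm_smul]
        gcongr
        · exact norm_putzerCoeff_le (fun i hi => hR _ (hμ i (hi.trans hjN))) t
        · exact norm_aeval_putzerPoly_le fun i hi =>
            spectrum.norm_le_norm_of_mem (hμ i (by omega))
    _ = Real.exp (R * |t|) * ∑ j ∈ Finset.range (N + 1), (2 * |t| * ‖A‖) ^ j := by
        rw [Finset.mul_sum]
        exact Finset.sum_congr rfl fun j _ => by ring
    _ ≤ Real.exp (R * |t|) * (1 + 2 * |t| * ‖A‖) ^ N := by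
        gcongr
        exact geom_sum_le_one_add_pow (by positivity) N

namespace Matrix

variable {ι : Type*} [Fintype ι] [DecidableEq ι]

theorem exists_putzerPoly_eq_charpoly (A : Matrix ι ι ℂ) :
    ∃ μ : ℕ → ℂ, putzerPoly μ (Fintype.card ι) = A.charpoly ∧
      ∀ i < Fintype.card ι, μ i ∈ spectrum ℂ A := by
  set l := A.charpoly.roots.toList
  have hl : l.length = Fintype.card ι := by
    rw [Multiset.length_toList, ← (IsAlgClosed.splits A.charpoly).natDegree_eq_card_roots,
      charpoly_natDegree_eq_dim]
  refine ⟨fun i => if h : i < l.length then l[i] else 0, ?_, fun i hi => ?_⟩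
  · rw [putzerPoly, ← hl, ← Fin.prod_univ_eq_prod_range]
    simp only [Fin.is_lt, dif_pos]
    rw [Fin.prod_univ_fun_getElem l (fun z => X - C z), Multiset.prod_map_toList]
    exact ((IsAlgClosed.splits _).eq_prod_roots_of_monic A.charpoly_monic).symm
  · have hmem : l[i] ∈ A.charpoly.roots := Multiset.mem_toList.1 (List.getElem_mem _)
    simpa [hl, hi] using mem_spectrum_of_isRoot_charpoly (isRoot_of_mem_roots hmem)

theorem norm_exp_smul_le_s16 [Nonempty ι] (A : Matrix ι ι ℂ) {R : ℝ}
    (hR : ∀ z ∈ spectrum ℂ A, |z.re| ≤ R) (t : ℝ) :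
    ‖NormedSpace.exp (t • A)‖ ≤
      Real.exp (R * |t|) * (1 + 2 * |t| * ‖A‖) ^ (Fintype.card ι - 1) := by
  obtain ⟨μ, hμ, hspec⟩ := A.exists_putzerPoly_eq_charpoly
  obtain ⟨N, hN⟩ := Nat.exists_eq_add_one_of_ne_zero (Fintype.card_ne_zero (α := ι))
  rw [hN] at hμ hspec
  rw [hN, Nat.add_sub_cancel]
  exact norm_exp_smul_le_of_aeval_putzerPoly_eq_zero (by rw [hμ, aeval_self_charpoly])
    (fun i hi => hspec i (by omega)) hR t

theorem norm_pow_mul_exp_smul_le [Nonempty ι] (A : Matrix ι ι ℂ) {R : ℝ}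
    (hR : ∀ z ∈ spectrum ℂ A, |z.re| ≤ R) (k : ℕ) (t : ℝ) :
    ‖A ^ k * NormedSpace.exp (t • A)‖ ≤
      ‖A‖ ^ k * (Real.exp (R * |t|) * (1 + 2 * |t| * ‖A‖) ^ (Fintype.card ι - 1)) :=
  (norm_mul_le _ _).trans
    (mul_le_mul (norm_pow_le _ _) (A.norm_exp_smul_le_s16 hR t) (norm_nonneg _) (by positivity))

end Matrix

end Putzer

theorem MvPolynomial.norm_eval_le {σ R : Type*} [NormedCommRing R] [NormOneClass R]
    (p : MvPolynomial σ R) {z : σ → R} {B : ℝ} (hB : 1 ≤ B) (hz : ∀ i, ‖z i‖ ≤ B) :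
    ‖eval z p‖ ≤ (∑ s ∈ p.support, ‖coeff s p‖) * B ^ p.totalDegree := by
  rw [eval_eq, Finset.sum_mul]
  refine (norm_sum_le _ _).trans (Finset.sum_le_sum fun s hs => ?_)
  refine (norm_mul_le _ _).trans (mul_le_mul_of_nonneg_left ?_ (norm_nonneg _))
  calc ‖∏ i ∈ s.support, z i ^ s i‖ ≤ ∏ i ∈ s.support, B ^ s i :=
        (Finset.norm_prod_le _ _).trans <| Finset.prod_le_prod (fun _ _ => norm_nonneg _)
          fun i _ => (norm_pow_le _ _).trans (pow_le_pow_left₀ (norm_nonneg _) (hz i) _)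
    _ = B ^ s.sum fun _ e => e := Finset.prod_pow_eq_pow_sum _ _ _
    _ ≤ B ^ p.totalDegree := pow_le_pow_right₀ hB (le_totalDegree hs)

theorem exists_norm_polyMatEval_le {m n : ℕ}
    (𝒢 : Matrix (Fin m) (Fin m) (MvPolynomial (Fin n) ℂ)) :
    ∃ M > 0, ∀ (z : Fin n → ℂ) (B : ℝ), 1 ≤ B → (∀ j, ‖z j‖ ≤ B) →
      ‖polyMatEval 𝒢 z‖ ≤
        M * B ^ Finset.univ.sup (fun p : Fin m × Fin m => (𝒢 p.1 p.2).totalDegree) := by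
  set d := Finset.univ.sup (fun p : Fin m × Fin m => (𝒢 p.1 p.2).totalDegree)
  set c : Fin m → Fin m → ℝ := fun i j => ∑ s ∈ (𝒢 i j).support, ‖MvPolynomial.coeff s (𝒢 i j)‖
  refine ⟨∑ i, ∑ j, c i j * ‖Matrix.single i j (1 : ℂ)‖ + 1, by positivity,
    fun z B hB hz => ?_⟩
  have hentry (i j : Fin m) : ‖polyMatEval 𝒢 z i j‖ ≤ c i j * B ^ d :=
    ((𝒢 i j).norm_eval_le hB hz).trans <| by
      gcongr
      exact Finset.le_sup (f := fun p : Fin m × Fin m => (𝒢 p.1 p.2).totalDegree)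
          (Finset.mem_univ (i, j))
  calc ‖polyMatEval 𝒢 z‖
      = ‖∑ i, ∑ j, polyMatEval 𝒢 z i j • Matrix.single i j (1 : ℂ)‖ := by
        simp_rw [Matrix.smul_single, smul_eq_mul, mul_one, ← Matrix.matrix_eq_sum_single]
    _ ≤ ∑ i, ∑ j, c i j * B ^ d * ‖Matrix.single i j (1 : ℂ)‖ := by
        refine (norm_sum_le _ _).trans (Finset.sum_le_sum fun i _ => ?_)
        refine (norm_sum_le _ _).trans (Finset.sum_le_sum fun j _ => ?_)
        exact (norm_smul_le _ _).trans (by gcongr; exact hentry i j)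
    _ ≤ (∑ i, ∑ j, c i j * ‖Matrix.single i j (1 : ℂ)‖ + 1) * B ^ d := by
        simp_rw [add_mul, Finset.sum_mul, one_mul, mul_right_comm _ (B ^ d)]
        linarith [one_le_pow₀ (n := d) hB]

theorem exp_pow_estimate_of_ehrenpreis_general (m n : ℕ) (hm : 1 ≤ m)
    (𝒢 : Matrix (Fin m) (Fin m) (MvPolynomial (Fin n) ℂ)) (d : ℕ)
    (hd : d = Finset.univ.sup (fun p : Fin m × Fin m => (𝒢 p.1 p.2).totalDegree))
    (C : ℝ)
    (hspec : ∀ ζ : EuclideanSpace ℂ (Fin n),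
      ∀ lam ∈ spectrum ℂ (polyMatEval 𝒢 (fun j => Complex.I * ζ j)),
        |lam.re| ≤ C * (1 + ‖imVec ζ‖)) :
    ∀ k : ℕ, ∃ D : ℝ, 0 < D ∧ ∀ (t : ℝ) (ζ : EuclideanSpace ℂ (Fin n)),
      ‖polyMatEval 𝒢 (fun j => Complex.I * ζ j) ^ k *
          NormedSpace.exp (t • polyMatEval 𝒢 (fun j => Complex.I * ζ j))‖ ≤
        Real.exp (C * |t|) * (1 + 2 * |t|) ^ (m - 1) * D * (1 + ‖ζ‖) ^ ((m + k - 1) * d) *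
          Real.exp (C * |t| * ‖imVec ζ‖) := by
  intro k
  obtain ⟨M, hM, hbound⟩ := exists_norm_polyMatEval_le 𝒢
  refine ⟨M ^ k * (1 + M) ^ (m - 1), by positivity, fun t ζ => ?_⟩
  have : Nonempty (Fin m) := ⟨⟨0, hm⟩⟩
  set A := polyMatEval 𝒢 (fun j => Complex.I * ζ j)
  set X := 1 + ‖ζ‖
  have hX : 1 ≤ X := le_add_of_nonneg_right (norm_nonneg ζ)
  have hA : ‖A‖ ≤ M * X ^ d := hd ▸ hbound _ X hX fun j => by
    simpa using (PiLp.norm_apply_le ζ j).trans (le_add_of_nonneg_left zero_le_one)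
  have hexp := A.norm_pow_mul_exp_smul_le (hspec ζ) k t
  rw [Fintype.card_fin] at hexp
  have hgrowth : 1 + 2 * |t| * ‖A‖ ≤ (1 + 2 * |t|) * ((1 + M) * X ^ d) := by
    nlinarith [abs_nonneg t, norm_nonneg A, one_le_pow₀ (n := d) hX]
  have hdeg : (m + k - 1) * d = d * k + d * (m - 1) := by
    rw [show m + k - 1 = k + (m - 1) by omega]
    ring
  calc ‖A ^ k * NormedSpace.exp (t • A)‖
      ≤ (M * X ^ d) ^ k * (Real.exp (C * (1 + ‖imVec ζ‖) * |t|) *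
          ((1 + 2 * |t|) * ((1 + M) * X ^ d)) ^ (m - 1)) :=
        hexp.trans (by gcongr)
    _ = _ := by
        rw [hdeg, pow_add, show C * (1 + ‖imVec ζ‖) * |t| =
          C * |t| + C * |t| * ‖imVec ζ‖ by ring, Real.exp_add]
        simp only [mul_pow, ← pow_mul]
        ring

/-- The estimate (7.4) of Section 7: if `max |Re σ(𝒢(iζ))| ≤ C(1+|Im ζ|)` for all
`ζ ∈ ℂⁿ`, then
for every `k ∈ ℕ`,
`‖𝒢(iζ)^k exp(t𝒢(iζ))‖ ≤ e^{C|t|}(1+2|t|)^{m-1} D_k (1+|ζ|)^{(m+k-1)d} e^{C|t||Im ζ|}`,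
where `d` is the maximal total degree of the entries of `𝒢`. -/
theorem exp_pow_estimate_of_ehrenpreis (m n : ℕ) (hm : 1 ≤ m) (hn : 1 ≤ n)
    (𝒢 : Matrix (Fin m) (Fin m) (MvPolynomial (Fin n) ℂ)) (d : ℕ)
    (hd : d = Finset.univ.sup (fun p : Fin m × Fin m => (𝒢 p.1 p.2).totalDegree))
    (C : ℝ) (hC : 0 < C)
    (hspec : ∀ ζ : EuclideanSpace ℂ (Fin n),
      ∀ lam ∈ spectrum ℂ (polyMatEval 𝒢 (fun j => Complex.I * ζ j)),
        |lam.re| ≤ C * (1 + ‖imVec ζ‖)) :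
    ∀ k : ℕ, ∃ D : ℝ, 0 < D ∧ ∀ (t : ℝ) (ζ : EuclideanSpace ℂ (Fin n)),
      ‖polyMatEval 𝒢 (fun j => Complex.I * ζ j) ^ k *
          NormedSpace.exp (t • polyMatEval 𝒢 (fun j => Complex.I * ζ j))‖ ≤
        Real.exp (C * |t|) * (1 + 2 * |t|) ^ (m - 1) * D * (1 + ‖ζ‖) ^ ((m + k - 1) * d) *
          Real.exp (C * |t| * ‖imVec ζ‖) :=
  exp_pow_estimate_of_ehrenpreis_general m n hm 𝒢 d hd C hspec
end
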